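/- arXiv:1903.03751 — 7 statements merged into one kernel-verified Lean document; each statement's English description precedes it below -/
import Mathlib

section
/- Let ψ be a branching mechanism with parameters α, ρ, π, and suppose Assumption 2 holds with parameters (η, β, δ). Then (ψ(z) + αz)/z^{1+β} → η as z → 0 with z ∈ (0,∞); equivalently, ψ(z) = −αz + η z^{1+β} (1 + o(1)) as z → 0⁺. -/
open MeasureTheory Set

/-- The measure `μ_{η,β}(dy) = η dy/(Γ(−1−β) y^{2+β})` on `(0,∞)`. -/
noncomputable def stableLevyMeasure (η β : ℝ) : Measure ℝ :=
  (volume.restrict (Set.Ioi (0 : ℝ))).withDensity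
    (fun y => ENNReal.ofReal (η / (Real.Gamma (-1 - β) * y ^ (2 + β))))

/-- The total variation measure `|μ − ν|` of the difference of two (finite)
measures, given as the sum of the two Jordan parts `(μ − ν) + (ν − μ)`. -/
noncomputable def tvDiff (μ ν : Measure ℝ) : Measure ℝ := (μ - ν) + (ν - μ)

/-- Assumption 2 with parameters `(η, β, δ)`:
`∫_{(1,∞)} y^{1+β+δ} |π − μ_{η,β}|(dy) < ∞`. -/
noncomputable def Assumption2 (π : Measure ℝ) (η β δ : ℝ) : Prop :=
  ∫⁻ y in Set.Ioi (1 : ℝ), ENNReal.ofReal (y ^ (1 + β + δ))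
    ∂(tvDiff (π.restrict (Set.Ioi 1)) ((stableLevyMeasure η β).restrict (Set.Ioi 1))) < ⊤

/-!
Write `ψ(z) + αz = ρz² + ∫ (e^{-zy} - 1 + zy) π(dy)`. For the stable measure `μ_{η,β}` the
integral is exactly `η z^{1+β}`: by `(e^{-zy} - 1 + zy)/y² = ∫₀^z (z - s) e^{-sy} ds` and
Tonelli it reduces to a Gamma integral, and `Γ(1-β) = β(1+β)Γ(-1-β)`. So it suffices to compare
`π` with `μ_{η,β}`. On `(0,1]` both integrals are `O(z²)` since `e^{-x} - 1 + x ≤ x²`. On `(1,∞)`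
their difference is at most
`∫ (e^{-zy} - 1 + zy) |π - μ_{η,β}|(dy) ≤ z^s ∫ y^{1+β+δ} |π - μ_{η,β}|(dy)`
for `s = 1 + β + min δ (1 - β)`, because `e^{-x} - 1 + x ≤ x^s` for `s ∈ [1,2]`. Both errors
are `o(z^{1+β})`.
-/
open Filter Topology Asymptotics
open scoped ENNReal

namespace Real

lemma exp_neg_sub_one_add_nonneg (x : ℝ) : 0 ≤ exp (-x) - 1 + x := by
  linarith [add_one_le_exp (-x)]

lemma exp_neg_sub_one_add_le_self {x : ℝ} (hx : 0 ≤ x) : exp (-x) - 1 + x ≤ x := by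
  linarith [exp_le_one_iff.mpr (neg_nonpos.mpr hx)]

lemma exp_neg_sub_one_add_le_sq {x : ℝ} (hx : 0 ≤ x) : exp (-x) - 1 + x ≤ x ^ 2 := by
  have hinv : exp (-x) * exp x = 1 := by rw [← exp_add, neg_add_cancel, exp_zero]
  nlinarith [quadratic_le_exp_of_nonneg hx, exp_pos (-x), exp_pos x]

lemma exp_neg_sub_one_add_le_rpow {x s : ℝ} (hx : 0 ≤ x) (hs₁ : 1 ≤ s) (hs₂ : s ≤ 2) :
    exp (-x) - 1 + x ≤ x ^ s := by
  rcases le_total x 1 with hx₁ | hx₁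
  · calc exp (-x) - 1 + x ≤ x ^ (2 : ℝ) := by
          simpa only [rpow_two] using exp_neg_sub_one_add_le_sq hx
      _ ≤ x ^ s := rpow_le_rpow_of_exponent_ge' hx hx₁ (by linarith) hs₂
  · calc exp (-x) - 1 + x ≤ x ^ (1 : ℝ) := by
          simpa only [rpow_one] using exp_neg_sub_one_add_le_self hx
      _ ≤ x ^ s := rpow_le_rpow_of_exponent_le hx₁ hs₁

lemma exp_neg_mul_sub_one_add_le_mul_min {z y : ℝ} (hz : 0 ≤ z) (hy : 0 ≤ y) :
    exp (-(z * y)) - 1 + z * y ≤ max z (z ^ 2) * min y (y ^ 2) := by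
  have hzy := mul_nonneg hz hy
  calc exp (-(z * y)) - 1 + z * y ≤ min (z * y) ((z * y) ^ 2) :=
        le_min (exp_neg_sub_one_add_le_self hzy) (exp_neg_sub_one_add_le_sq hzy)
    _ ≤ min (max z (z ^ 2) * y) (max z (z ^ 2) * y ^ 2) := by
        rw [mul_pow]
        gcongr
        · exact le_max_left _ _
        · exact le_max_right _ _
    _ = max z (z ^ 2) * min y (y ^ 2) := (mul_min_of_nonneg _ _ (by positivity)).symm

lemma Gamma_one_sub_eq {β : ℝ} (h₀ : β ≠ 0) (h₁ : β ≠ -1) :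
    Gamma (1 - β) = β * (1 + β) * Gamma (-1 - β) := by
  have e₀ := Gamma_add_one (neg_ne_zero.mpr h₀)
  have e₁ := Gamma_add_one (s := -1 - β) (by contrapose! h₁; linarith)
  rw [show -1 - β + 1 = -β by ring] at e₁
  rw [show 1 - β = -β + 1 by ring, e₀, e₁]
  ring

lemma Gamma_neg_one_sub_pos {β : ℝ} (hβ : β ∈ Ioo 0 1) : 0 < Gamma (-1 - β) := by
  obtain ⟨hβ₀, hβ₁⟩ := hβ
  have h := Gamma_one_sub_eq hβ₀.ne' (by linarith)
  have hpos : 0 < Gamma (1 - β) := Gamma_pos_of_pos (by linarith)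
  rw [h] at hpos
  exact pos_of_mul_pos_right hpos (by positivity)

lemma integral_sub_mul_exp_neg_mul {y : ℝ} (hy : y ≠ 0) (z : ℝ) :
    ∫ s in (0 : ℝ)..z, (z - s) * exp (-(s * y)) = (exp (-(z * y)) - 1 + z * y) / y ^ 2 := by
  have hderiv : ∀ s ∈ uIcc 0 z, HasDerivAt (fun s => exp (-(s * y)) * ((s - z) / y + 1 / y ^ 2))
      ((z - s) * exp (-(s * y))) s := by
    intro s _
    have h₁ : HasDerivAt (fun s => exp (-(s * y))) (exp (-(s * y)) * -y) s :=
      (hasDerivAt_mul_const y).neg.exp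
    have h₂ : HasDerivAt (fun s => (s - z) / y + 1 / y ^ 2) (1 / y) s :=
      ((hasDerivAt_id s).sub_const z).div_const y |>.add_const _
    refine (h₁.mul h₂).congr_deriv ?_
    field_simp
    ring
  rw [intervalIntegral.integral_eq_sub_of_hasDerivAt hderiv
    (by apply Continuous.intervalIntegrable; fun_prop)]
  field_simp
  simp only [mul_zero, neg_zero, exp_zero]
  ring

lemma integral_sub_mul_rpow_sub_one {β z : ℝ} (hβ : 0 < β) (hz : 0 ≤ z) :
    ∫ s in (0 : ℝ)..z, (z - s) * s ^ (β - 1) = z ^ (1 + β) / (β * (1 + β)) := by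
  have hsplit : ∀ s ∈ uIcc 0 z, (z - s) * s ^ (β - 1) = z * s ^ (β - 1) - s ^ β := by
    intro s hs
    rcases (uIcc_of_le hz ▸ hs).1.eq_or_lt with rfl | hs₀
    · simp [zero_rpow hβ.ne']
    · rw [sub_mul, ← rpow_one_add' hs₀.le (by linarith), add_sub_cancel]
  rw [intervalIntegral.integral_congr hsplit, intervalIntegral.integral_sub
    ((intervalIntegral.intervalIntegrable_rpow' (by linarith)).const_mul z)
    (intervalIntegral.intervalIntegrable_rpow' (by linarith)),
    intervalIntegral.integral_const_mul, integral_rpow (Or.inl (by linarith)),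
    integral_rpow (Or.inl (by linarith)), zero_rpow (by linarith), zero_rpow (by linarith),
    sub_add_cancel, add_comm β 1, rpow_one_add' hz (by linarith)]
  field_simp
  ring

lemma lintegral_rpow_neg_mul_exp_neg_mul {β s : ℝ} (hβ : β < 1) (hs : 0 < s) :
    ∫⁻ y in Ioi 0, ENNReal.ofReal (y ^ (-β) * exp (-(s * y)))
      = ENNReal.ofReal (Gamma (1 - β) * s ^ (β - 1)) := by
  have hint : IntegrableOn (fun y : ℝ => y ^ (-β) * exp (-(s * y))) (Ioi 0) := by
    simpa only [rpow_one, neg_mul] using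
      integrableOn_rpow_mul_exp_neg_mul_rpow (p := 1) (by linarith) one_pos hs
  have hnonneg : 0 ≤ᵐ[volume.restrict (Ioi 0)] fun y : ℝ => y ^ (-β) * exp (-(s * y)) := by
    filter_upwards [ae_restrict_mem measurableSet_Ioi] with y (hy : 0 < y)
    positivity
  rw [← ofReal_integral_eq_lintegral_ofReal hint hnonneg]
  have h := integral_rpow_mul_exp_neg_mul_Ioi (a := 1 - β) (by linarith) hs
  rw [show 1 - β - 1 = -β by ring, one_div, inv_rpow hs.le, ← rpow_neg hs.le, neg_sub] at h
  rw [h, mul_comm]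

lemma ofReal_exp_neg_mul_sub_one_add_div_rpow_eq_lintegral {β z y : ℝ} (hz : 0 ≤ z) (hy : 0 < y) :
    ENNReal.ofReal ((exp (-(z * y)) - 1 + z * y) / y ^ (2 + β))
      = ∫⁻ s in Ioc 0 z, ENNReal.ofReal (y ^ (-β) * ((z - s) * exp (-(s * y)))) := by
  have hint : IntegrableOn (fun s => y ^ (-β) * ((z - s) * exp (-(s * y)))) (Ioc 0 z) :=
    (by fun_prop : Continuous _).integrableOn_Ioc
  have hnonneg : 0 ≤ᵐ[volume.restrict (Ioc 0 z)]
      fun s => y ^ (-β) * ((z - s) * exp (-(s * y))) := by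
    filter_upwards [ae_restrict_mem measurableSet_Ioc] with s hs
    have : 0 ≤ z - s := sub_nonneg.mpr hs.2
    positivity
  rw [← ofReal_integral_eq_lintegral_ofReal hint hnonneg, integral_const_mul,
    ← intervalIntegral.integral_of_le hz, integral_sub_mul_exp_neg_mul hy.ne', rpow_add hy,
    rpow_neg hy.le, rpow_two]
  congr 1
  field_simp

theorem lintegral_exp_neg_mul_sub_one_add_div_rpow {β z : ℝ} (hβ : β ∈ Ioo 0 1) (hz : 0 ≤ z) :
    ∫⁻ y in Ioi 0, ENNReal.ofReal ((exp (-(z * y)) - 1 + z * y) / y ^ (2 + β))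
      = ENNReal.ofReal (Gamma (-1 - β) * z ^ (1 + β)) := by
  obtain ⟨hβ₀, hβ₁⟩ := hβ
  have hint : IntegrableOn (fun s => Gamma (1 - β) * ((z - s) * s ^ (β - 1))) (Ioc 0 z) := by
    have h := (intervalIntegral.intervalIntegrable_rpow' (a := 0) (b := z) (r := β - 1)
      (by linarith)).continuousOn_mul (g := fun s => z - s) (by fun_prop)
    rw [intervalIntegrable_iff_integrableOn_Ioc_of_le hz] at h
    exact h.const_mul _
  have hnonneg : 0 ≤ᵐ[volume.restrict (Ioc 0 z)]
      fun s => Gamma (1 - β) * ((z - s) * s ^ (β - 1)) := by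
    filter_upwards [ae_restrict_mem measurableSet_Ioc] with s hs
    have : 0 ≤ z - s := sub_nonneg.mpr hs.2
    have : 0 < Gamma (1 - β) := Gamma_pos_of_pos (by linarith)
    have : 0 < s := hs.1
    positivity
  calc ∫⁻ y in Ioi 0, ENNReal.ofReal ((exp (-(z * y)) - 1 + z * y) / y ^ (2 + β))
      = ∫⁻ y in Ioi 0, ∫⁻ s in Ioc 0 z,
          ENNReal.ofReal (y ^ (-β) * ((z - s) * exp (-(s * y)))) :=
        setLIntegral_congr_fun measurableSet_Ioi fun y hy =>
          ofReal_exp_neg_mul_sub_one_add_div_rpow_eq_lintegral hz hy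
    _ = ∫⁻ s in Ioc 0 z, ∫⁻ y in Ioi 0,
          ENNReal.ofReal (y ^ (-β) * ((z - s) * exp (-(s * y)))) :=
        lintegral_lintegral_swap (Measurable.aemeasurable (by fun_prop))
    _ = ∫⁻ s in Ioc 0 z, ENNReal.ofReal (Gamma (1 - β) * ((z - s) * s ^ (β - 1))) := by
        refine setLIntegral_congr_fun measurableSet_Ioc fun s hs => ?_
        have hzs : 0 ≤ z - s := sub_nonneg.mpr hs.2
        simp_rw [mul_left_comm _ (z - s), ENNReal.ofReal_mul hzs]
        rw [lintegral_const_mul' _ _ ENNReal.ofReal_ne_top,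
          lintegral_rpow_neg_mul_exp_neg_mul hβ₁ hs.1, ← ENNReal.ofReal_mul hzs]
    _ = ENNReal.ofReal (Gamma (1 - β) * ∫ s in (0 : ℝ)..z, (z - s) * s ^ (β - 1)) := by
        rw [intervalIntegral.integral_of_le hz, ← integral_const_mul,
          ofReal_integral_eq_lintegral_ofReal hint hnonneg]
    _ = ENNReal.ofReal (Gamma (-1 - β) * z ^ (1 + β)) := by
        rw [integral_sub_mul_rpow_sub_one hβ₀ hz, Gamma_one_sub_eq hβ₀.ne' (by linarith)]
        field_simp

lemma exp_neg_mul_sub_one_add_le_rpow_mul_rpow {z y s p : ℝ} (hz : 0 ≤ z) (hy : 1 ≤ y)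
    (hs₁ : 1 ≤ s) (hs₂ : s ≤ 2) (hsp : s ≤ p) :
    exp (-(z * y)) - 1 + z * y ≤ z ^ s * y ^ p :=
  calc exp (-(z * y)) - 1 + z * y ≤ (z * y) ^ s :=
        exp_neg_sub_one_add_le_rpow (mul_nonneg hz (by linarith)) hs₁ hs₂
    _ = z ^ s * y ^ s := mul_rpow hz (by linarith)
    _ ≤ z ^ s * y ^ p := by gcongr

end Real

lemma isLittleO_rpow_rpow_nhdsGT_zero {a b : ℝ} (hab : a < b) :
    (fun x : ℝ => x ^ b) =o[𝓝[>] 0] fun x => x ^ a := by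
  have hpos : ∀ᶠ x : ℝ in 𝓝[>] 0, 0 < x := self_mem_nhdsWithin
  rw [isLittleO_iff_tendsto' (hpos.mono fun x hx h => absurd h (Real.rpow_pos_of_pos hx a).ne')]
  have hlim : Tendsto (fun x : ℝ => x ^ (b - a)) (𝓝[>] 0) (𝓝 0) := by
    have h := (Real.continuousAt_rpow_const 0 (b - a) (Or.inr (by linarith))).tendsto
    rw [Real.zero_rpow (by linarith)] at h
    exact tendsto_nhdsWithin_of_tendsto_nhds h
  exact hlim.congr' (hpos.mono fun x hx => Real.rpow_sub hx b a)

lemma isLittleO_sq_rpow_nhdsGT_zero {a : ℝ} (ha : a < 2) :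
    (fun x : ℝ => x ^ 2) =o[𝓝[>] 0] fun x => x ^ a := by
  simpa only [Real.rpow_two] using isLittleO_rpow_rpow_nhdsGT_zero ha

section TotalVariation

lemma tvDiff_comm (μ ν : Measure ℝ) : tvDiff μ ν = tvDiff ν μ := add_comm _ _

lemma tvDiff_le_add (μ ν : Measure ℝ) : tvDiff μ ν ≤ μ + ν :=
  add_le_add Measure.sub_le Measure.sub_le

lemma le_tvDiff_add (μ ν : Measure ℝ) [IsFiniteMeasure μ] [IsFiniteMeasure ν] :
    μ ≤ tvDiff μ ν + ν :=
  (Measure.sub_le_iff_le_add.mp le_rfl).trans (add_le_add (Measure.le_add_right le_rfl) le_rfl)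

lemma ae_mem_tvDiff_restrict (μ ν : Measure ℝ) {s : Set ℝ} (hs : MeasurableSet s) :
    ∀ᵐ y ∂tvDiff (μ.restrict s) (ν.restrict s), y ∈ s :=
  (Measure.absolutelyContinuous_of_le (tvDiff_le_add _ _)).ae_le
    (ae_add_measure_iff.mpr ⟨ae_restrict_mem hs, ae_restrict_mem hs⟩)

lemma lintegral_le_lintegral_tvDiff_add (μ ν : Measure ℝ) [IsFiniteMeasure μ] [IsFiniteMeasure ν]
    (f : ℝ → ℝ≥0∞) : ∫⁻ y, f y ∂μ ≤ ∫⁻ y, f y ∂tvDiff μ ν + ∫⁻ y, f y ∂ν :=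
  (lintegral_mono' (le_tvDiff_add μ ν) le_rfl).trans_eq (lintegral_add_measure _ _ _)

lemma abs_toReal_lintegral_sub_le {μ ν : Measure ℝ} [IsFiniteMeasure μ] [IsFiniteMeasure ν]
    {f : ℝ → ℝ≥0∞} (hν : ∫⁻ y, f y ∂ν ≠ ⊤) (hτ : ∫⁻ y, f y ∂tvDiff μ ν ≠ ⊤) :
    |(∫⁻ y, f y ∂μ).toReal - (∫⁻ y, f y ∂ν).toReal| ≤ (∫⁻ y, f y ∂tvDiff μ ν).toReal := by
  have hμν := lintegral_le_lintegral_tvDiff_add μ ν f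
  have hνμ := lintegral_le_lintegral_tvDiff_add ν μ f
  rw [tvDiff_comm] at hνμ
  have hμ : ∫⁻ y, f y ∂μ ≠ ⊤ := ne_top_of_le_ne_top (by finiteness) hμν
  have h₁ := ENNReal.toReal_mono (by finiteness) hμν
  have h₂ := ENNReal.toReal_mono (by finiteness) hνμ
  rw [ENNReal.toReal_add hτ hν] at h₁
  rw [ENNReal.toReal_add hτ hμ] at h₂
  rw [abs_sub_le_iff]
  constructor <;> linarith

end TotalVariation

section StableLevyMeasure

variable {η β : ℝ}

lemma setLIntegral_stableLevyMeasure {s : Set ℝ} (hs : MeasurableSet s) {f : ℝ → ℝ≥0∞}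
    (hf : Measurable f) :
    ∫⁻ y in s, f y ∂stableLevyMeasure η β
      = ∫⁻ y in s ∩ Ioi 0, ENNReal.ofReal (η / (Real.Gamma (-1 - β) * y ^ (2 + β))) * f y := by
  rw [stableLevyMeasure, restrict_withDensity hs, Measure.restrict_restrict hs,
    lintegral_withDensity_eq_lintegral_mul _ (by fun_prop) hf]
  rfl

lemma stableLevyMeasure_Ioi_one_lt_top (hβ : -1 < β) : stableLevyMeasure η β (Ioi 1) < ⊤ := by
  rw [← setLIntegral_one, setLIntegral_stableLevyMeasure measurableSet_Ioi measurable_const,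
    inter_eq_left.mpr (Ioi_subset_Ioi zero_le_one)]
  have hint : IntegrableOn (fun y : ℝ => η / Real.Gamma (-1 - β) * y ^ (-(2 + β))) (Ioi 1) :=
    (integrableOn_Ioi_rpow_of_lt (by linarith) one_pos).const_mul _
  refine lt_of_eq_of_lt (setLIntegral_congr_fun measurableSet_Ioi fun y (hy : 1 < y) => ?_)
    hint.lintegral_lt_top
  rw [mul_one, Real.rpow_neg (by linarith)]
  ring_nf

lemma lintegral_Ioc_sq_stableLevyMeasure_lt_top (hβ : β < 1) :
    ∫⁻ y in Ioc 0 1, ENNReal.ofReal (y ^ 2) ∂stableLevyMeasure η β < ⊤ := by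
  rw [setLIntegral_stableLevyMeasure measurableSet_Ioc (by fun_prop),
    inter_eq_left.mpr Ioc_subset_Ioi_self]
  have hint : IntegrableOn (fun y : ℝ => η / Real.Gamma (-1 - β) * y ^ (-β)) (Ioc 0 1) := by
    have h := intervalIntegral.intervalIntegrable_rpow' (a := 0) (b := 1) (r := -β) (by linarith)
    rw [intervalIntegrable_iff_integrableOn_Ioc_of_le zero_le_one] at h
    exact h.const_mul _
  refine lt_of_eq_of_lt (setLIntegral_congr_fun measurableSet_Ioc fun y hy => ?_)
    hint.lintegral_lt_top
  rw [← ENNReal.ofReal_mul' (sq_nonneg y), Real.rpow_add hy.1, Real.rpow_neg hy.1.le,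
    Real.rpow_two]
  have : y ≠ 0 := hy.1.ne'
  congr 1
  field_simp

lemma lintegral_stableLevyMeasure_exp_neg_mul_sub_one_add (hη : 0 ≤ η) (hβ : β ∈ Ioo 0 1)
    {z : ℝ} (hz : 0 ≤ z) :
    ∫⁻ y in Ioi 0, ENNReal.ofReal (Real.exp (-(z * y)) - 1 + z * y) ∂stableLevyMeasure η β
      = ENNReal.ofReal (η * z ^ (1 + β)) := by
  have hΓ := Real.Gamma_neg_one_sub_pos hβ
  rw [setLIntegral_stableLevyMeasure measurableSet_Ioi (by fun_prop), inter_self]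
  calc ∫⁻ y in Ioi 0, ENNReal.ofReal (η / (Real.Gamma (-1 - β) * y ^ (2 + β)))
          * ENNReal.ofReal (Real.exp (-(z * y)) - 1 + z * y)
      = ∫⁻ y in Ioi 0, ENNReal.ofReal (η / Real.Gamma (-1 - β))
          * ENNReal.ofReal ((Real.exp (-(z * y)) - 1 + z * y) / y ^ (2 + β)) := by
        refine setLIntegral_congr_fun measurableSet_Ioi fun y (hy : 0 < y) => ?_
        rw [← ENNReal.ofReal_mul (by positivity), ← ENNReal.ofReal_mul (by positivity)]
        congr 1
        have : y ^ (2 + β) ≠ 0 := (Real.rpow_pos_of_pos hy _).ne'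
        field_simp
    _ = ENNReal.ofReal (η * z ^ (1 + β)) := by
        rw [lintegral_const_mul' _ _ ENNReal.ofReal_ne_top,
          Real.lintegral_exp_neg_mul_sub_one_add_div_rpow hβ hz,
          ← ENNReal.ofReal_mul (by positivity)]
        congr 1
        field_simp

end StableLevyMeasure

section LevyMeasure

variable {ν : Measure ℝ}

lemma lintegral_Ioc_sq_lt_top_of_lintegral_min_lt_top
    (hν : ∫⁻ y in Ioi 0, ENNReal.ofReal (min y (y ^ 2)) ∂ν < ⊤) :
    ∫⁻ y in Ioc 0 1, ENNReal.ofReal (y ^ 2) ∂ν < ⊤ := by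
  refine lt_of_le_of_lt ?_
    ((lintegral_mono_set (Ioc_subset_Ioi_self : Ioc (0 : ℝ) 1 ⊆ Ioi 0)).trans_lt hν)
  refine setLIntegral_mono' measurableSet_Ioc fun y hy => ENNReal.ofReal_le_ofReal ?_
  rw [min_eq_right (by nlinarith [hy.1, hy.2])]

lemma measure_Ioi_one_lt_top_of_lintegral_min_lt_top
    (hν : ∫⁻ y in Ioi 0, ENNReal.ofReal (min y (y ^ 2)) ∂ν < ⊤) : ν (Ioi 1) < ⊤ := by
  rw [← setLIntegral_one]
  refine lt_of_le_of_lt ?_ ((lintegral_mono_set (Ioi_subset_Ioi zero_le_one)).trans_lt hν)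
  refine setLIntegral_mono' measurableSet_Ioi fun y (hy : 1 < y) => ?_
  rw [← ENNReal.ofReal_one]
  exact ENNReal.ofReal_le_ofReal (le_min hy.le (by nlinarith))

lemma lintegral_exp_neg_mul_sub_one_add_lt_top
    (hν : ∫⁻ y in Ioi 0, ENNReal.ofReal (min y (y ^ 2)) ∂ν < ⊤) {z : ℝ} (hz : 0 ≤ z) :
    ∫⁻ y in Ioi 0, ENNReal.ofReal (Real.exp (-(z * y)) - 1 + z * y) ∂ν < ⊤ := by
  refine lt_of_le_of_lt ?_ (ENNReal.mul_lt_top (ENNReal.ofReal_lt_top (r := max z (z ^ 2))) hν)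
  rw [← lintegral_const_mul' _ _ ENNReal.ofReal_ne_top]
  refine setLIntegral_mono' measurableSet_Ioi fun y (hy : 0 < y) => ?_
  rw [← ENNReal.ofReal_mul (by positivity)]
  exact ENNReal.ofReal_le_ofReal (Real.exp_neg_mul_sub_one_add_le_mul_min hz hy.le)

end LevyMeasure

/-- `∫_s (e^{-zy} - 1 + zy) ν(dy)`, with the junk value `0` when the integral diverges. -/
noncomputable def compensatedLaplace (ν : Measure ℝ) (s : Set ℝ) (z : ℝ) : ℝ :=
  (∫⁻ y in s, ENNReal.ofReal (Real.exp (-(z * y)) - 1 + z * y) ∂ν).toReal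

section CompensatedLaplace

variable {ν : Measure ℝ}

lemma compensatedLaplace_nonneg {s : Set ℝ} {z : ℝ} : 0 ≤ compensatedLaplace ν s z :=
  ENNReal.toReal_nonneg

lemma integral_eq_compensatedLaplace {s : Set ℝ} {z : ℝ} :
    ∫ y in s, (Real.exp (-(z * y)) - 1 + z * y) ∂ν = compensatedLaplace ν s z :=
  integral_eq_lintegral_of_nonneg_ae (ae_of_all _ fun y => Real.exp_neg_sub_one_add_nonneg _)
    (by fun_prop)

lemma compensatedLaplace_Ioi_zero {z : ℝ}
    (h : ∫⁻ y in Ioi 0, ENNReal.ofReal (Real.exp (-(z * y)) - 1 + z * y) ∂ν ≠ ⊤) :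
    compensatedLaplace ν (Ioi 0) z
      = compensatedLaplace ν (Ioc 0 1) z + compensatedLaplace ν (Ioi 1) z := by
  rw [← Ioc_union_Ioi_eq_Ioi zero_le_one,
    lintegral_union measurableSet_Ioi (Ioc_disjoint_Ioi le_rfl)] at h
  rw [compensatedLaplace, ← Ioc_union_Ioi_eq_Ioi zero_le_one,
    lintegral_union measurableSet_Ioi (Ioc_disjoint_Ioi le_rfl),
    ENNReal.toReal_add (ENNReal.add_ne_top.mp h).1 (ENNReal.add_ne_top.mp h).2]
  rfl

lemma compensatedLaplace_stableLevyMeasure {η β z : ℝ} (hη : 0 ≤ η) (hβ : β ∈ Ioo 0 1)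
    (hz : 0 ≤ z) : compensatedLaplace (stableLevyMeasure η β) (Ioi 0) z = η * z ^ (1 + β) := by
  rw [compensatedLaplace, lintegral_stableLevyMeasure_exp_neg_mul_sub_one_add hη hβ hz,
    ENNReal.toReal_ofReal (by positivity)]

lemma isBigO_compensatedLaplace_Ioc (hν : ∫⁻ y in Ioc 0 1, ENNReal.ofReal (y ^ 2) ∂ν < ⊤) :
    compensatedLaplace ν (Ioc 0 1) =O[𝓝[>] 0] fun z => z ^ 2 := by
  set C := ∫⁻ y in Ioc 0 1, ENNReal.ofReal (y ^ 2) ∂ν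
  refine IsBigO.of_bound C.toReal (eventually_mem_nhdsWithin.mono fun z (hz : 0 < z) => ?_)
  have hle : ∫⁻ y in Ioc 0 1, ENNReal.ofReal (Real.exp (-(z * y)) - 1 + z * y) ∂ν
      ≤ ENNReal.ofReal (z ^ 2) * C := by
    rw [← lintegral_const_mul' _ _ ENNReal.ofReal_ne_top]
    refine setLIntegral_mono' measurableSet_Ioc fun y hy => ?_
    rw [← ENNReal.ofReal_mul (by positivity), ← mul_pow]
    exact ENNReal.ofReal_le_ofReal (Real.exp_neg_sub_one_add_le_sq (by nlinarith [hy.1]))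
  rw [Real.norm_of_nonneg compensatedLaplace_nonneg, norm_pow, Real.norm_of_nonneg hz.le,
    mul_comm]
  calc compensatedLaplace ν (Ioc 0 1) z ≤ (ENNReal.ofReal (z ^ 2) * C).toReal :=
        ENNReal.toReal_mono (by finiteness) hle
    _ = z ^ 2 * C.toReal := by rw [ENNReal.toReal_mul, ENNReal.toReal_ofReal (by positivity)]

lemma isBigO_compensatedLaplace_Ioi_one_sub {π μ : Measure ℝ}
    [IsFiniteMeasure (π.restrict (Ioi 1))] [IsFiniteMeasure (μ.restrict (Ioi 1))] {p s : ℝ}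
    (hs₁ : 1 ≤ s) (hs₂ : s ≤ 2) (hsp : s ≤ p)
    (hτ : ∫⁻ y in Ioi 1, ENNReal.ofReal (y ^ p)
      ∂tvDiff (π.restrict (Ioi 1)) (μ.restrict (Ioi 1)) < ⊤)
    (hμ : ∀ z, 0 < z →
      ∫⁻ y in Ioi 1, ENNReal.ofReal (Real.exp (-(z * y)) - 1 + z * y) ∂μ ≠ ⊤) :
    (fun z => compensatedLaplace π (Ioi 1) z - compensatedLaplace μ (Ioi 1) z)
      =O[𝓝[>] 0] fun z => z ^ s := by
  set τ := tvDiff (π.restrict (Ioi 1)) (μ.restrict (Ioi 1))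
  have hsupp := ae_mem_tvDiff_restrict π μ (measurableSet_Ioi (a := (1 : ℝ)))
  rw [Measure.restrict_eq_self_of_ae_mem hsupp] at hτ
  set K := ∫⁻ y, ENNReal.ofReal (y ^ p) ∂τ
  refine IsBigO.of_bound K.toReal (eventually_mem_nhdsWithin.mono fun z (hz : 0 < z) => ?_)
  have hle : ∫⁻ y, ENNReal.ofReal (Real.exp (-(z * y)) - 1 + z * y) ∂τ
      ≤ ENNReal.ofReal (z ^ s) * K := by
    rw [← lintegral_const_mul' _ _ ENNReal.ofReal_ne_top]
    refine lintegral_mono_ae (hsupp.mono fun y (hy : 1 < y) => ?_)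
    rw [← ENNReal.ofReal_mul (by positivity)]
    exact ENNReal.ofReal_le_ofReal
      (Real.exp_neg_mul_sub_one_add_le_rpow_mul_rpow hz.le hy.le hs₁ hs₂ hsp)
  rw [Real.norm_of_nonneg (Real.rpow_nonneg hz.le s), mul_comm]
  calc ‖compensatedLaplace π (Ioi 1) z - compensatedLaplace μ (Ioi 1) z‖
      ≤ (∫⁻ y, ENNReal.ofReal (Real.exp (-(z * y)) - 1 + z * y) ∂τ).toReal :=
        abs_toReal_lintegral_sub_le (hμ z hz) (ne_top_of_le_ne_top (by finiteness) hle)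
    _ ≤ (ENNReal.ofReal (z ^ s) * K).toReal := ENNReal.toReal_mono (by finiteness) hle
    _ = z ^ s * K.toReal := by rw [ENNReal.toReal_mul, ENNReal.toReal_ofReal (by positivity)]

end CompensatedLaplace

theorem isLittleO_integral_exp_neg_mul_sub_one_add_sub {π : Measure ℝ} {η β δ : ℝ}
    (hη : 0 ≤ η) (hβ : β ∈ Ioo 0 1) (hδ : 0 < δ)
    (hmom : ∫⁻ y in Ioi 0, ENNReal.ofReal (min y (y ^ 2)) ∂π < ⊤) (hasp : Assumption2 π η β δ) :
    (fun z => ∫ y in Ioi 0, (Real.exp (-(z * y)) - 1 + z * y) ∂π - η * z ^ (1 + β))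
      =o[𝓝[>] 0] fun z => z ^ (1 + β) := by
  set μ := stableLevyMeasure η β
  obtain ⟨hβ₀, hβ₁⟩ := hβ
  have hμ (z : ℝ) (hz : 0 ≤ z) :=
    lintegral_stableLevyMeasure_exp_neg_mul_sub_one_add hη ⟨hβ₀, hβ₁⟩ hz
  have : IsFiniteMeasure (π.restrict (Ioi 1)) :=
    isFiniteMeasure_restrict.mpr (measure_Ioi_one_lt_top_of_lintegral_min_lt_top hmom).ne
  have : IsFiniteMeasure (μ.restrict (Ioi 1)) :=
    isFiniteMeasure_restrict.mpr (stableLevyMeasure_Ioi_one_lt_top (by linarith)).ne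
  have hdecomp : ∀ᶠ z in 𝓝[>] 0,
      (compensatedLaplace π (Ioc 0 1) z - compensatedLaplace μ (Ioc 0 1) z)
        + (compensatedLaplace π (Ioi 1) z - compensatedLaplace μ (Ioi 1) z)
      = ∫ y in Ioi 0, (Real.exp (-(z * y)) - 1 + z * y) ∂π - η * z ^ (1 + β) := by
    filter_upwards [self_mem_nhdsWithin] with z (hz : 0 < z)
    rw [integral_eq_compensatedLaplace,
      compensatedLaplace_Ioi_zero (lintegral_exp_neg_mul_sub_one_add_lt_top hmom hz.le).ne,
      ← compensatedLaplace_stableLevyMeasure hη ⟨hβ₀, hβ₁⟩ hz.le,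
      compensatedLaplace_Ioi_zero (by rw [hμ z hz.le]; exact ENNReal.ofReal_ne_top)]
    ring
  have hbody := ((isBigO_compensatedLaplace_Ioc
    (lintegral_Ioc_sq_lt_top_of_lintegral_min_lt_top hmom)).sub (isBigO_compensatedLaplace_Ioc
    (lintegral_Ioc_sq_stableLevyMeasure_lt_top (η := η) hβ₁))).trans_isLittleO
    (isLittleO_sq_rpow_nhdsGT_zero (a := 1 + β) (by linarith))
  have htail (z : ℝ) (hz : 0 < z) :=
    ne_top_of_le_ne_top (by rw [hμ z hz.le]; exact ENNReal.ofReal_ne_top)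
      (lintegral_mono_set (Ioi_subset_Ioi zero_le_one))
  -- `s = 1 + β + min δ (1 - β)` lies in `(1 + β, 2]` and below the moment order `1 + β + δ`.
  have hgap : 0 < min δ (1 - β) := lt_min hδ (by linarith)
  have hjumps := (isBigO_compensatedLaplace_Ioi_one_sub (s := 1 + β + min δ (1 - β))
    (by linarith) (by linarith [min_le_right δ (1 - β)]) (by linarith [min_le_left δ (1 - β)])
    hasp htail).trans_isLittleO (isLittleO_rpow_rpow_nhdsGT_zero (a := 1 + β) (by linarith))
  exact (hbody.add hjumps).congr' hdecomp (EventuallyEq.refl _ _)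

theorem stmt1_general (α ρ η β δ : ℝ) (π : Measure ℝ)
    (hη : 0 < η) (hβ : β ∈ Set.Ioo (0 : ℝ) 1) (hδ : 0 < δ)
    (hmom : ∫⁻ y in Set.Ioi (0 : ℝ), ENNReal.ofReal (min y (y ^ 2)) ∂π < ⊤)
    (hasp : Assumption2 π η β δ)
    (ψ : ℝ → ℝ)
    (hψ : ∀ z : ℝ, 0 ≤ z → ψ z = -α * z + ρ * z ^ 2
        + ∫ y in Set.Ioi (0 : ℝ), (Real.exp (-(z * y)) - 1 + z * y) ∂π) :
    Filter.Tendsto (fun z : ℝ => (ψ z + α * z) / z ^ (1 + β))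
      (nhdsWithin 0 (Set.Ioi 0)) (nhds η) := by
  have hsmall : (fun z => ψ z + α * z - η * z ^ (1 + β)) =o[𝓝[>] 0] fun z => z ^ (1 + β) := by
    refine (((isLittleO_sq_rpow_nhdsGT_zero (a := 1 + β) (by linarith [hβ.2])).const_mul_left ρ).add
      (isLittleO_integral_exp_neg_mul_sub_one_add_sub hη.le hβ hδ hmom hasp)).congr' ?_
      (EventuallyEq.refl _ _)
    filter_upwards [self_mem_nhdsWithin] with z (hz : 0 < z)
    rw [hψ z hz.le]
    ring
  rw [← tendsto_sub_nhds_zero_iff]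
  refine hsmall.tendsto_div_nhds_zero.congr' ?_
  filter_upwards [self_mem_nhdsWithin] with z (hz : 0 < z)
  rw [sub_div, mul_div_cancel_right₀ _ (Real.rpow_pos_of_pos hz _).ne']

/-- Let `ψ` be a branching mechanism with parameters `α, ρ, π` satisfying
Assumption 2 with parameters `(η, β, δ)`.  Then `(ψ(z) + αz)/z^{1+β} → η` as
`z → 0⁺`. -/
theorem stmt1 (α ρ η β δ : ℝ) (π : Measure ℝ)
    (hα : 0 < α) (hρ : 0 ≤ ρ) (hη : 0 < η) (hβ : β ∈ Set.Ioo (0 : ℝ) 1) (hδ : 0 < δ)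
    (hmom : ∫⁻ y in Set.Ioi (0 : ℝ), ENNReal.ofReal (min y (y ^ 2)) ∂π < ⊤)
    (hasp : Assumption2 π η β δ)
    (ψ : ℝ → ℝ)
    (hψ : ∀ z : ℝ, 0 ≤ z → ψ z = -α * z + ρ * z ^ 2
        + ∫ y in Set.Ioi (0 : ℝ), (Real.exp (-(z * y)) - 1 + z * y) ∂π) :
    Filter.Tendsto (fun z : ℝ => (ψ z + α * z) / z ^ (1 + β))
      (nhdsWithin 0 (Set.Ioi 0)) (nhds η) :=
  stmt1_general α ρ η β δ π hη hβ hδ hmom hasp ψ hψ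
end

section
/- Let π be a Borel measure on (0,∞) with ∫_{(0,∞)} (y ∧ y²) π(dy) < ∞. Then the functions h(z) = ∫_{(0,∞)} (e^{−zy} − 1 + zy) π(dy) and h'(z) = ∫_{(0,∞)} (1 − e^{−zy}) y π(dy) are well defined for all z ∈ ℂ₊ (the integrals converge absolutely), both are continuous on ℂ₊ and holomorphic on ℂ₊⁰, and for every z₀ ∈ ℂ₊, (h(z) − h(z₀))/(z − z₀) → h'(z₀) as z → z₀ with z ∈ ℂ₊, z ≠ z₀. -/
open MeasureTheory Complex Set Filter Topology

/-!
Write `m y = min y (y ^ 2)`. For `0 ≤ Re w` one has `‖1 - e^{-w}‖ ≤ min 2 ‖w‖`, so the integrand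
of `h'` is bounded by `(2 + ‖z‖) m y` on the closed half-plane, and by the mean value inequality on
`{0 ≤ Re} ∩ closedBall 0 R` the integrand of `h` is `(2 + R) m`-Lipschitz in `z`. Dominated
convergence for the difference quotients then shows that `h` has derivative `h'` within the closed
half-plane, which gives at once the continuity of `h`, its holomorphy on the open half-plane and the
limit of the difference quotients. On `{δ ≤ Re}` the derivative `e^{-zy} y²` of the integrand of
`h'` is bounded by `(1 + 1/δ) m y`, so the same argument makes `h'` holomorphic on the open
half-plane; its continuity up to the boundary is dominated convergence with the first bound.
-/

section DominatedSlope

variable {α : Type*} [MeasurableSpace α] {μ : Measure α} {𝕜 : Type*} [RCLike 𝕜] {E : Type*}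
  [NormedAddCommGroup E] [NormedSpace ℝ E] [NormedSpace 𝕜 E]

theorem hasDerivWithinAt_integral_of_dominated_slope {F : 𝕜 → α → E} {F' : α → E}
    {s : Set 𝕜} {x₀ : 𝕜} {bound : α → ℝ}
    (hF_int : ∀ᶠ x in 𝓝[s \ {x₀}] x₀, Integrable (F x) μ) (hF₀ : Integrable (F x₀) μ)
    (h_lip : ∀ᶠ x in 𝓝[s \ {x₀}] x₀, ∀ᵐ a ∂μ, ‖F x a - F x₀ a‖ ≤ bound a * ‖x - x₀‖)
    (bound_int : Integrable bound μ)
    (h_diff : ∀ᵐ a ∂μ, HasDerivWithinAt (F · a) (F' a) s x₀) :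
    HasDerivWithinAt (fun x ↦ ∫ a, F x a ∂μ) (∫ a, F' a ∂μ) s x₀ := by
  rw [hasDerivWithinAt_iff_tendsto_slope]
  have h_slope : (fun x ↦ ∫ a, slope (F · a) x₀ x ∂μ) =ᶠ[𝓝[s \ {x₀}] x₀]
      slope (fun x ↦ ∫ a, F x a ∂μ) x₀ := by
    filter_upwards [hF_int] with x hx
    simp only [slope_def_module]
    rw [integral_smul, integral_sub hx hF₀]
  refine (tendsto_integral_filter_of_dominated_convergence bound ?_ ?_ bound_int ?_).congr' h_slope
  · filter_upwards [hF_int] with x hx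
    exact (hx.sub hF₀).aestronglyMeasurable.const_smul _
  · filter_upwards [h_lip, self_mem_nhdsWithin] with x hx hxs
    filter_upwards [hx] with a ha
    have hne : 0 < ‖x - x₀‖ := norm_pos_iff.2 (sub_ne_zero.2 hxs.2)
    rw [slope_def_module, norm_smul, norm_inv, inv_mul_le_iff₀ hne, mul_comm]
    exact ha
  · filter_upwards [h_diff] with a ha
    exact hasDerivWithinAt_iff_tendsto_slope.1 ha

end DominatedSlope

theorem setOf_le_re_mem_nhds {δ : ℝ} {z : ℂ} (h : δ < z.re) : {w : ℂ | δ ≤ w.re} ∈ 𝓝 z :=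
  continuous_re.continuousAt.preimage_mem_nhds (Ici_mem_nhds h)

theorem norm_cexp_neg_le_one {w : ℂ} (hw : 0 ≤ w.re) : ‖cexp (-w)‖ ≤ 1 := by
  rw [norm_exp, Real.exp_le_one_iff, neg_re]
  linarith

theorem norm_one_sub_cexp_neg_le_two {w : ℂ} (hw : 0 ≤ w.re) : ‖1 - cexp (-w)‖ ≤ 2 := by
  calc ‖1 - cexp (-w)‖ ≤ ‖(1 : ℂ)‖ + ‖cexp (-w)‖ := norm_sub_le _ _
    _ ≤ 2 := by rw [norm_one]; linarith [norm_cexp_neg_le_one hw]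

theorem norm_one_sub_cexp_neg_le_norm {w : ℂ} (hw : 0 ≤ w.re) : ‖1 - cexp (-w)‖ ≤ ‖w‖ := by
  have h := (convex_halfSpace_re_ge (0 : ℝ)).norm_image_sub_le_of_norm_hasDerivWithin_le
    (f := fun ζ ↦ cexp (-ζ)) (C := 1)
    (fun ζ _ ↦ ((hasDerivAt_id ζ).neg.cexp).hasDerivWithinAt)
    (fun ζ hζ ↦ by simpa using norm_cexp_neg_le_one hζ) (x := 0) (by simp) hw
  simpa [norm_sub_rev] using h

theorem min_mul_le_add_mul_min {a b y : ℝ} (ha : 0 ≤ a) (hb : 0 ≤ b) (hy : 0 ≤ y) :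
    min (a * y) (b * y ^ 2) ≤ (a + b) * min y (y ^ 2) := by
  rcases le_total y 1 with h | h
  · rw [min_eq_right (by nlinarith : y ^ 2 ≤ y)]
    exact (min_le_right _ _).trans (by nlinarith)
  · rw [min_eq_left (by nlinarith : y ≤ y ^ 2)]
    exact (min_le_left _ _).trans (by nlinarith)

theorem exp_neg_mul_mul_sq_le {δ y : ℝ} (hδ : 0 < δ) (hy : 0 ≤ y) :
    Real.exp (-(δ * y)) * y ^ 2 ≤ (1 + 1 / δ) * min y (y ^ 2) := by
  rcases le_total y 1 with h | h
  · rw [min_eq_right (by nlinarith : y ^ 2 ≤ y)]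
    have h₁ : Real.exp (-(δ * y)) ≤ 1 := Real.exp_le_one_iff.2 (by nlinarith)
    have h₂ : 0 ≤ 1 / δ := by positivity
    nlinarith [sq_nonneg y]
  · rw [min_eq_left (by nlinarith : y ≤ y ^ 2)]
    have hkey : δ * y * Real.exp (-(δ * y)) ≤ 1 := by
      rw [Real.exp_neg, ← div_eq_mul_inv, div_le_one (Real.exp_pos _)]
      linarith [Real.add_one_le_exp (δ * y)]
    calc Real.exp (-(δ * y)) * y ^ 2 = δ * y * Real.exp (-(δ * y)) * y / δ := by
          field_simp
      _ ≤ 1 * y / δ := by gcongr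
      _ = 1 / δ * y := by ring
      _ ≤ (1 + 1 / δ) * y := by gcongr; linarith

namespace LevyExponent

noncomputable def kernel (z : ℂ) (y : ℝ) : ℂ := cexp (-(z * y)) - 1 + z * y

noncomputable def kernelDeriv (z : ℂ) (y : ℝ) : ℂ := (1 - cexp (-(z * y))) * y

noncomputable def kernelDeriv2 (z : ℂ) (y : ℝ) : ℂ := cexp (-(z * y)) * (y : ℂ) ^ 2

theorem hasDerivAt_kernel (y : ℝ) (z : ℂ) : HasDerivAt (kernel · y) (kernelDeriv z y) z := by
  have h : HasDerivAt (fun ζ : ℂ ↦ ζ * y) y z := hasDerivAt_mul_const _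
  exact ((h.neg.cexp.sub_const 1).add h).congr_deriv (by rw [kernelDeriv, Pi.neg_apply]; ring)

theorem hasDerivAt_kernelDeriv (y : ℝ) (z : ℂ) :
    HasDerivAt (kernelDeriv · y) (kernelDeriv2 z y) z := by
  have h : HasDerivAt (fun ζ : ℂ ↦ ζ * y) y z := hasDerivAt_mul_const _
  exact ((h.neg.cexp.const_sub 1).mul_const (y : ℂ)).congr_deriv
    (by rw [kernelDeriv2, Pi.neg_apply]; ring)

theorem continuous_kernel (z : ℂ) : Continuous (kernel z) := by
  unfold kernel; fun_prop

theorem continuous_kernelDeriv (z : ℂ) : Continuous (kernelDeriv z) := by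
  unfold kernelDeriv; fun_prop

theorem kernel_zero (y : ℝ) : kernel 0 y = 0 := by
  simp [kernel]

theorem norm_kernelDeriv_le {z : ℂ} (hz : 0 ≤ z.re) {y : ℝ} (hy : 0 ≤ y) :
    ‖kernelDeriv z y‖ ≤ (2 + ‖z‖) * min y (y ^ 2) := by
  have hzy : 0 ≤ (z * y).re := by rw [re_mul_ofReal]; positivity
  have h : ‖1 - cexp (-(z * y))‖ ≤ min 2 (‖z‖ * y) := by
    refine le_min (norm_one_sub_cexp_neg_le_two hzy) ?_
    simpa [abs_of_nonneg hy] using norm_one_sub_cexp_neg_le_norm hzy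
  calc ‖kernelDeriv z y‖ = ‖1 - cexp (-(z * y))‖ * y := by
        rw [kernelDeriv, norm_mul, norm_real, Real.norm_of_nonneg hy]
    _ ≤ min 2 (‖z‖ * y) * y := by gcongr
    _ = min (2 * y) (‖z‖ * y ^ 2) := by rw [min_mul_of_nonneg _ _ hy]; ring_nf
    _ ≤ (2 + ‖z‖) * min y (y ^ 2) := min_mul_le_add_mul_min zero_le_two (norm_nonneg z) hy

theorem norm_kernel_sub_le {R y : ℝ} (hy : 0 ≤ y) {z w : ℂ} (hz : 0 ≤ z.re) (hzR : ‖z‖ ≤ R)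
    (hw : 0 ≤ w.re) (hwR : ‖w‖ ≤ R) :
    ‖kernel z y - kernel w y‖ ≤ (2 + R) * min y (y ^ 2) * ‖z - w‖ := by
  have hs : Convex ℝ ({ζ : ℂ | 0 ≤ ζ.re} ∩ Metric.closedBall 0 R) :=
    (convex_halfSpace_re_ge 0).inter (convex_closedBall 0 R)
  refine hs.norm_image_sub_le_of_norm_hasDerivWithin_le
    (fun ζ _ ↦ (hasDerivAt_kernel y ζ).hasDerivWithinAt) (fun ζ hζ ↦ ?_)
    ⟨hw, mem_closedBall_zero_iff.2 hwR⟩ ⟨hz, mem_closedBall_zero_iff.2 hzR⟩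
  have hζR : ‖ζ‖ ≤ R := mem_closedBall_zero_iff.1 hζ.2
  calc ‖kernelDeriv ζ y‖ ≤ (2 + ‖ζ‖) * min y (y ^ 2) := norm_kernelDeriv_le hζ.1 hy
    _ ≤ (2 + R) * min y (y ^ 2) := by gcongr

theorem norm_kernel_le {z : ℂ} (hz : 0 ≤ z.re) {y : ℝ} (hy : 0 ≤ y) :
    ‖kernel z y‖ ≤ (2 + ‖z‖) * ‖z‖ * min y (y ^ 2) := by
  have h := norm_kernel_sub_le hy hz le_rfl (w := 0) le_rfl (by simp)
  rw [kernel_zero, sub_zero, sub_zero] at h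
  exact h.trans_eq (by ring)

theorem norm_kernelDeriv2_le {δ : ℝ} (hδ : 0 < δ) {z : ℂ} (hz : δ ≤ z.re) {y : ℝ} (hy : 0 ≤ y) :
    ‖kernelDeriv2 z y‖ ≤ (1 + 1 / δ) * min y (y ^ 2) := by
  calc ‖kernelDeriv2 z y‖ = Real.exp (-(z.re * y)) * y ^ 2 := by
        rw [kernelDeriv2, norm_mul, norm_exp, norm_pow, norm_real, Real.norm_of_nonneg hy,
          neg_re, re_mul_ofReal]
    _ ≤ Real.exp (-(δ * y)) * y ^ 2 := by gcongr
    _ ≤ (1 + 1 / δ) * min y (y ^ 2) := exp_neg_mul_mul_sq_le hδ hy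

theorem norm_kernelDeriv_sub_le {δ : ℝ} (hδ : 0 < δ) {y : ℝ} (hy : 0 ≤ y) {z w : ℂ}
    (hz : δ ≤ z.re) (hw : δ ≤ w.re) :
    ‖kernelDeriv z y - kernelDeriv w y‖ ≤ (1 + 1 / δ) * min y (y ^ 2) * ‖z - w‖ :=
  (convex_halfSpace_re_ge δ).norm_image_sub_le_of_norm_hasDerivWithin_le
    (f := (kernelDeriv · y)) (fun ζ _ ↦ (hasDerivAt_kernelDeriv y ζ).hasDerivWithinAt)
    (fun _ hζ ↦ norm_kernelDeriv2_le hδ hζ hy) hw hz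

section Integrals

variable {μ : Measure ℝ}

theorem integrable_kernel (hpos : ∀ᵐ y ∂μ, 0 ≤ y) (hm : Integrable (fun y ↦ min y (y ^ 2)) μ)
    {z : ℂ} (hz : 0 ≤ z.re) : Integrable (kernel z) μ :=
  (hm.const_mul _).mono' (continuous_kernel z).aestronglyMeasurable
    (hpos.mono fun _ hy ↦ norm_kernel_le hz hy)

theorem integrable_kernelDeriv (hpos : ∀ᵐ y ∂μ, 0 ≤ y)
    (hm : Integrable (fun y ↦ min y (y ^ 2)) μ) {z : ℂ} (hz : 0 ≤ z.re) :
    Integrable (kernelDeriv z) μ :=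
  (hm.const_mul _).mono' (continuous_kernelDeriv z).aestronglyMeasurable
    (hpos.mono fun _ hy ↦ norm_kernelDeriv_le hz hy)

theorem hasDerivWithinAt_integral_kernel (hpos : ∀ᵐ y ∂μ, 0 ≤ y)
    (hm : Integrable (fun y ↦ min y (y ^ 2)) μ) {z₀ : ℂ} (hz₀ : 0 ≤ z₀.re) :
    HasDerivWithinAt (fun z ↦ ∫ y, kernel z y ∂μ) (∫ y, kernelDeriv z₀ y ∂μ)
      {z | 0 ≤ z.re} z₀ := by
  have hR : ∀ᶠ z in 𝓝 z₀, ‖z‖ ≤ ‖z₀‖ + 1 :=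
    (continuous_norm.tendsto z₀).eventually (eventually_le_nhds (lt_add_one _))
  refine hasDerivWithinAt_integral_of_dominated_slope
    (bound := fun y ↦ (2 + (‖z₀‖ + 1)) * min y (y ^ 2)) ?_ (integrable_kernel hpos hm hz₀) ?_
    (hm.const_mul _) (ae_of_all _ fun y ↦ (hasDerivAt_kernel y z₀).hasDerivWithinAt)
  · filter_upwards [self_mem_nhdsWithin] with z hz using integrable_kernel hpos hm hz.1
  · filter_upwards [nhdsWithin_le_nhds hR, self_mem_nhdsWithin] with z hzR hz
    filter_upwards [hpos] with y hy using norm_kernel_sub_le hy hz.1 hzR hz₀ (by linarith)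

theorem continuousOn_integral_kernelDeriv (hpos : ∀ᵐ y ∂μ, 0 ≤ y)
    (hm : Integrable (fun y ↦ min y (y ^ 2)) μ) :
    ContinuousOn (fun z ↦ ∫ y, kernelDeriv z y ∂μ) {z | 0 ≤ z.re} := by
  intro z₀ _
  have hR : ∀ᶠ z in 𝓝 z₀, ‖z‖ ≤ ‖z₀‖ + 1 :=
    (continuous_norm.tendsto z₀).eventually (eventually_le_nhds (lt_add_one _))
  refine continuousWithinAt_of_dominated (bound := fun y ↦ (2 + (‖z₀‖ + 1)) * min y (y ^ 2))
    (Eventually.of_forall fun z ↦ (continuous_kernelDeriv z).aestronglyMeasurable) ?_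
    (hm.const_mul _)
    (ae_of_all _ fun y ↦ (hasDerivAt_kernelDeriv y z₀).continuousAt.continuousWithinAt)
  filter_upwards [nhdsWithin_le_nhds hR, self_mem_nhdsWithin] with z hzR hz
  filter_upwards [hpos] with y hy
  exact (norm_kernelDeriv_le hz hy).trans (by gcongr)

theorem hasDerivAt_integral_kernelDeriv (hpos : ∀ᵐ y ∂μ, 0 ≤ y)
    (hm : Integrable (fun y ↦ min y (y ^ 2)) μ) {z₀ : ℂ} (hz₀ : 0 < z₀.re) :
    HasDerivAt (fun z ↦ ∫ y, kernelDeriv z y ∂μ) (∫ y, kernelDeriv2 z₀ y ∂μ) z₀ := by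
  have hδ : 0 < z₀.re / 2 := half_pos hz₀
  refine (hasDerivWithinAt_integral_of_dominated_slope (s := {z | z₀.re / 2 ≤ z.re})
    (bound := fun y ↦ (1 + 1 / (z₀.re / 2)) * min y (y ^ 2)) ?_
    (integrable_kernelDeriv hpos hm hz₀.le) ?_ (hm.const_mul _)
    (ae_of_all _ fun y ↦ (hasDerivAt_kernelDeriv y z₀).hasDerivWithinAt)).hasDerivAt
    (setOf_le_re_mem_nhds (half_lt_self hz₀))
  · filter_upwards [self_mem_nhdsWithin] with z hz
      using integrable_kernelDeriv hpos hm (hδ.le.trans hz.1)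
  · filter_upwards [self_mem_nhdsWithin] with z hz
    filter_upwards [hpos] with y hy using norm_kernelDeriv_sub_le hδ hy hz.1 (half_le_self hz₀.le)

end Integrals

end LevyExponent

open LevyExponent

/-- Let `π` be a Borel measure on `(0,∞)` with `∫ (y ∧ y²) π(dy) < ∞`.  Then
`h(z) = ∫ (e^{−zy} − 1 + zy) π(dy)` and `h'(z) = ∫ (1 − e^{−zy}) y π(dy)` are
well defined on `ℂ₊` (the integrals converge absolutely), both are continuous on
`ℂ₊` and holomorphic on `ℂ₊⁰`, and the difference quotient of `h` converges to
`h'(z₀)` within `ℂ₊`. -/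
theorem stmt7 (π : Measure ℝ)
    (hmom : ∫⁻ y in Set.Ioi (0 : ℝ), ENNReal.ofReal (min y (y ^ 2)) ∂π < ⊤)
    (h h' : ℂ → ℂ)
    (hh : ∀ z : ℂ, 0 ≤ z.re →
      h z = ∫ y in Set.Ioi (0 : ℝ), (Complex.exp (-(z * y)) - 1 + z * y) ∂π)
    (hh' : ∀ z : ℂ, 0 ≤ z.re →
      h' z = ∫ y in Set.Ioi (0 : ℝ), ((1 - Complex.exp (-(z * y))) * y) ∂π) :
    (∀ z : ℂ, 0 ≤ z.re →
        IntegrableOn (fun y : ℝ => Complex.exp (-(z * y)) - 1 + z * y) (Set.Ioi 0) π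
        ∧ IntegrableOn (fun y : ℝ => (1 - Complex.exp (-(z * y))) * y) (Set.Ioi 0) π)
    ∧ ContinuousOn h {z : ℂ | 0 ≤ z.re}
    ∧ ContinuousOn h' {z : ℂ | 0 ≤ z.re}
    ∧ DifferentiableOn ℂ h {z : ℂ | 0 < z.re}
    ∧ DifferentiableOn ℂ h' {z : ℂ | 0 < z.re}
    ∧ ∀ z₀ : ℂ, 0 ≤ z₀.re →
        Filter.Tendsto (fun z : ℂ => (h z - h z₀) / (z - z₀))
          (nhdsWithin z₀ ({z : ℂ | 0 ≤ z.re} \ {z₀})) (nhds (h' z₀)) := by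
  have hpos : ∀ᵐ y ∂π.restrict (Ioi 0), (0 : ℝ) ≤ y :=
    (ae_restrict_mem measurableSet_Ioi).mono fun _ hy ↦ le_of_lt hy
  have hm : Integrable (fun y ↦ min y (y ^ 2)) (π.restrict (Ioi 0)) :=
    ⟨(continuous_id.min (continuous_pow 2)).aestronglyMeasurable,
      (hasFiniteIntegral_iff_ofReal (hpos.mono fun y hy ↦ le_min hy (sq_nonneg y))).2 hmom⟩
  have hderiv : ∀ z₀ : ℂ, 0 ≤ z₀.re → HasDerivWithinAt h (h' z₀) {z | 0 ≤ z.re} z₀ := by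
    intro z₀ hz₀
    rw [hh' z₀ hz₀]
    exact (hasDerivWithinAt_integral_kernel hpos hm hz₀).congr hh (hh z₀ hz₀)
  refine ⟨fun z hz ↦ ⟨integrable_kernel hpos hm hz, integrable_kernelDeriv hpos hm hz⟩,
    fun z hz ↦ (hderiv z hz).continuousWithinAt,
    (continuousOn_integral_kernelDeriv hpos hm).congr hh',
    fun z hz ↦ ((hderiv z hz.le).hasDerivAt
      (setOf_le_re_mem_nhds hz)).differentiableAt.differentiableWithinAt,
    fun z hz ↦ (hasDerivAt_integral_kernelDeriv hpos hm hz).differentiableAt.differentiableWithinAt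
      |>.congr (fun w hw ↦ hh' w (le_of_lt hw)) (hh' z hz.le),
    fun z₀ hz₀ ↦ ?_⟩
  exact (hasDerivWithinAt_iff_tendsto_slope.1 (hderiv z₀ hz₀)).congr (slope_def_field h z₀)
end

section
/- Let β ∈ (0,1). For every z ∈ ℂ with Re z ≥ 0, the integral ∫_0^∞ (e^{−zy} − 1) / (Γ(−β) y^{1+β}) dy converges absolutely and equals z^β, where Γ is the Gamma function extended to negative non-integer arguments (note Γ(−β) < 0) and z^β is the principal-branch power with 0^β = 0. -/
/-!
For real `z = r > 0`, integrating by parts against `d(y^{-β})` turns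
`∫₀^∞ (e^{-ry} - 1) y^{-1-β} dy` into `-(r/β) ∫₀^∞ y^{-β} e^{-ry} dy = -r^β Γ(1-β)/β`,
which is `Γ(-β) r^β` because `Γ(1-β) = -β Γ(-β)`. Both sides are holomorphic on `Re z > 0`
(the `z`-derivative of the integrand is dominated by `y^{-β} e^{-εy}` near any point), so they
agree there by the identity theorem. The bound `|e^{-zy} - 1| ≤ min (|z| y) 2` makes the integral
absolutely convergent and, by dominated convergence, continuous on `Re z ≥ 0`, which carries the
identity to the boundary.
-/

open MeasureTheory Complex Set Filter Topology
open scoped Real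

lemma Real.Gamma_one_sub_eq_neg_mul_Gamma_neg {β : ℝ} (hβ : β ≠ 0) :
    Real.Gamma (1 - β) = -β * Real.Gamma (-β) := by
  rw [← Real.Gamma_add_one (neg_ne_zero.2 hβ), neg_add_eq_sub]

lemma Real.Gamma_neg_ne_zero_of_mem_Ioo {β : ℝ} (hβ : β ∈ Ioo (0 : ℝ) 1) :
    Real.Gamma (-β) ≠ 0 := by
  have h := (Real.Gamma_pos_of_pos (sub_pos.2 hβ.2)).ne'
  rw [Real.Gamma_one_sub_eq_neg_mul_Gamma_neg hβ.1.ne'] at h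
  exact right_ne_zero_of_mul h

lemma Real.integral_rpow_neg_mul_exp_neg_mul_Ioi {β : ℝ} (hβ : β < 1) {r : ℝ} (hr : 0 < r) :
    ∫ y in Ioi 0, y ^ (-β) * rexp (-(r * y)) = r ^ (β - 1) * Real.Gamma (1 - β) := by
  have h := Real.integral_rpow_mul_exp_neg_mul_Ioi (sub_pos.2 hβ) hr
  rw [sub_sub_cancel_left] at h
  rw [h, one_div, Real.inv_rpow hr.le, ← Real.rpow_neg hr.le, neg_sub]

lemma Complex.norm_exp_sub_one_le_min {w : ℂ} (hw : w.re ≤ 0) : ‖cexp w - 1‖ ≤ min ‖w‖ 2 := by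
  have hexp_le : ∀ u : ℂ, u.re ≤ 0 → ‖cexp u‖ ≤ 1 := fun u hu => by
    rw [Complex.norm_exp]; exact Real.exp_le_one_iff.2 hu
  refine le_min ?_ ?_
  · simpa using (convex_halfSpace_re_le 0).norm_image_sub_le_of_norm_hasDerivWithin_le
      (fun u _ => (Complex.hasDerivAt_exp u).hasDerivWithinAt) hexp_le
      (by simp : (0 : ℂ) ∈ {u : ℂ | u.re ≤ 0}) hw
  · calc ‖cexp w - 1‖ ≤ ‖cexp w‖ + ‖(1 : ℂ)‖ := norm_sub_le _ _
      _ ≤ 1 + 1 := by rw [norm_one]; gcongr; exact hexp_le w hw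
      _ = 2 := one_add_one_eq_two

lemma Real.abs_exp_neg_sub_one_le_min {t : ℝ} (ht : 0 ≤ t) : |rexp (-t) - 1| ≤ min t 2 := by
  rw [abs_sub_comm, abs_of_nonneg (sub_nonneg.2 (Real.exp_le_one_iff.2 (neg_nonpos.2 ht)))]
  exact le_min (by linarith [Real.add_one_le_exp (-t)]) (by linarith [Real.exp_pos (-t)])

lemma Real.self_mul_rpow_neg_one_add {y : ℝ} (hy : 0 < y) (β : ℝ) :
    y * y ^ (-(1 + β)) = y ^ (-β) := by
  rw [show -β = 1 + -(1 + β) by ring, Real.rpow_add hy, Real.rpow_one]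

lemma integrableOn_min_mul_mul_rpow_neg_one_add {β : ℝ} (hβ : β ∈ Ioo (0 : ℝ) 1) {M : ℝ}
    (hM : 0 ≤ M) : IntegrableOn (fun y : ℝ => min (M * y) 2 * y ^ (-(1 + β))) (Ioi 0) := by
  have hmeas : AEStronglyMeasurable (fun y : ℝ => min (M * y) 2 * y ^ (-(1 + β))) volume := by
    fun_prop
  rw [← Ioc_union_Ioi_eq_Ioi zero_le_one]
  refine IntegrableOn.union ?_ ?_
  · refine Integrable.mono'
      ((intervalIntegral.intervalIntegrable_rpow' (by linarith [hβ.2] : (-1 : ℝ) < -β)).1.const_mul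
        M)
      hmeas.restrict ((ae_restrict_iff' measurableSet_Ioc).2 (.of_forall fun y hy => ?_))
    rw [Real.norm_of_nonneg (by have := hy.1; positivity)]
    calc min (M * y) 2 * y ^ (-(1 + β)) ≤ M * y * y ^ (-(1 + β)) :=
          mul_le_mul_of_nonneg_right (min_le_left _ _) (Real.rpow_nonneg hy.1.le _)
      _ = M * y ^ (-β) := by rw [mul_assoc, Real.self_mul_rpow_neg_one_add hy.1]
  · refine Integrable.mono'
      ((integrableOn_Ioi_rpow_of_lt (by linarith [hβ.1] : -(1 + β) < -1) one_pos).const_mul 2)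
      hmeas.restrict ((ae_restrict_iff' measurableSet_Ioi).2 (.of_forall fun y hy => ?_))
    have hy0 : (0 : ℝ) < y := one_pos.trans hy
    rw [Real.norm_of_nonneg (by positivity)]
    exact mul_le_mul_of_nonneg_right (min_le_right _ _) (Real.rpow_nonneg hy0.le _)

noncomputable def levyIntegrand (β : ℝ) (z : ℂ) (y : ℝ) : ℂ :=
  (cexp (-(z * y)) - 1) / ((y ^ (1 + β) : ℝ) : ℂ)

lemma measurable_levyIntegrand (β : ℝ) (z : ℂ) : Measurable (levyIntegrand β z) := by
  unfold levyIntegrand; fun_prop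

lemma continuous_levyIntegrand_left (β : ℝ) (y : ℝ) : Continuous (levyIntegrand β · y) := by
  unfold levyIntegrand; fun_prop

lemma norm_levyIntegrand_le {β : ℝ} {z : ℂ} (hz : 0 ≤ z.re) {y : ℝ} (hy : 0 < y) :
    ‖levyIntegrand β z y‖ ≤ min (‖z‖ * y) 2 * y ^ (-(1 + β)) := by
  have hre : (-(z * y)).re ≤ 0 := by
    simp only [neg_re, re_mul_ofReal, neg_nonpos]
    exact mul_nonneg hz hy.le
  have hnorm : ‖-(z * (y : ℂ))‖ = ‖z‖ * y := by simp [abs_of_pos hy]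
  rw [levyIntegrand, norm_div, Complex.norm_real, Real.norm_of_nonneg (by positivity),
    Real.rpow_neg hy.le, ← div_eq_mul_inv, ← hnorm]
  gcongr
  exact Complex.norm_exp_sub_one_le_min hre

lemma integrableOn_levyIntegrand {β : ℝ} (hβ : β ∈ Ioo (0 : ℝ) 1) {z : ℂ} (hz : 0 ≤ z.re) :
    IntegrableOn (levyIntegrand β z) (Ioi 0) :=
  (integrableOn_min_mul_mul_rpow_neg_one_add hβ (norm_nonneg z)).mono'
    (measurable_levyIntegrand β z).aestronglyMeasurable
    ((ae_restrict_iff' measurableSet_Ioi).2 (.of_forall fun _ hy => norm_levyIntegrand_le hz hy))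

lemma continuousOn_integral_levyIntegrand {β : ℝ} (hβ : β ∈ Ioo (0 : ℝ) 1) :
    ContinuousOn (fun z : ℂ => ∫ y in Ioi 0, levyIntegrand β z y) {z | 0 ≤ z.re} := by
  intro z₀ _
  have hnear : ∀ᶠ z in 𝓝[{z | 0 ≤ z.re}] z₀, 0 ≤ z.re ∧ ‖z‖ ≤ ‖z₀‖ + 1 :=
    eventually_mem_nhdsWithin.and <| nhdsWithin_le_nhds <|
      (continuous_norm.tendsto z₀).eventually (eventually_le_nhds (lt_add_one _))
  refine continuousWithinAt_of_dominated
    (.of_forall fun z => (measurable_levyIntegrand β z).aestronglyMeasurable) ?_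
    (integrableOn_min_mul_mul_rpow_neg_one_add hβ (by positivity : 0 ≤ ‖z₀‖ + 1))
    (.of_forall fun y => (continuous_levyIntegrand_left β y).continuousWithinAt)
  filter_upwards [hnear] with z ⟨hz, hz_norm⟩
  filter_upwards [ae_restrict_mem measurableSet_Ioi] with y (hy : 0 < y)
  refine (norm_levyIntegrand_le hz hy).trans ?_
  gcongr

lemma hasDerivAt_levyIntegrand (β : ℝ) (z : ℂ) (y : ℝ) :
    HasDerivAt (levyIntegrand β · y) (cexp (-(z * y)) * -y / ((y ^ (1 + β) : ℝ) : ℂ)) z :=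
  ((hasDerivAt_mul_const (x := z) (y : ℂ)).neg.cexp.sub_const 1).div_const _

lemma differentiableOn_integral_levyIntegrand {β : ℝ} (hβ : β ∈ Ioo (0 : ℝ) 1) :
    DifferentiableOn ℂ (fun z : ℂ => ∫ y in Ioi 0, levyIntegrand β z y) {z | 0 < z.re} := by
  intro z₀ hz₀
  set ε := z₀.re / 2 with hε_def
  have hε : 0 < ε := half_pos hz₀
  have hball : ∀ z ∈ Metric.ball z₀ ε, ε ≤ z.re := fun z hz => by
    have := (abs_le.1 ((abs_re_le_norm (z - z₀)).trans (mem_ball_iff_norm.1 hz).le)).1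
    rw [sub_re] at this
    linarith
  have hbound : ∀ y : ℝ, 0 < y → ∀ z ∈ Metric.ball z₀ ε,
      ‖cexp (-(z * y)) * -y / ((y ^ (1 + β) : ℝ) : ℂ)‖ ≤ y ^ (-β) * rexp (-(ε * y)) := by
    intro y hy z hz
    have hre : (-(z * y)).re ≤ -(ε * y) := by
      simp only [neg_re, re_mul_ofReal, neg_le_neg_iff]
      exact mul_le_mul_of_nonneg_right (hball z hz) hy.le
    rw [norm_div, norm_mul, norm_neg, Complex.norm_real, Complex.norm_real, Complex.norm_exp,
      Real.norm_of_nonneg hy.le, Real.norm_of_nonneg (by positivity), div_eq_mul_inv,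
      ← Real.rpow_neg hy.le, mul_assoc, Real.self_mul_rpow_neg_one_add hy β, mul_comm]
    gcongr
  have hderiv := hasDerivAt_integral_of_dominated_loc_of_deriv_le (Metric.ball_mem_nhds z₀ hε)
    (.of_forall fun z => (measurable_levyIntegrand β z).aestronglyMeasurable)
    (integrableOn_levyIntegrand hβ hz₀.le) (Measurable.aestronglyMeasurable (by fun_prop))
    ((ae_restrict_iff' measurableSet_Ioi).2 (.of_forall hbound))
    (by
      have h := integrableOn_rpow_mul_exp_neg_mul_rpow (by linarith [hβ.2] : -1 < -β) one_pos hε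
      simp only [Real.rpow_one, neg_mul] at h
      exact h)
    (.of_forall fun y z _ => hasDerivAt_levyIntegrand β z y)
  exact hderiv.2.differentiableAt.differentiableWithinAt

lemma integrableOn_exp_neg_mul_sub_one_div_rpow {β : ℝ} (hβ : β ∈ Ioo (0 : ℝ) 1) {r : ℝ}
    (hr : 0 < r) : IntegrableOn (fun y : ℝ => (rexp (-(r * y)) - 1) / y ^ (1 + β)) (Ioi 0) := by
  refine (integrableOn_min_mul_mul_rpow_neg_one_add hβ hr.le).mono'
    (Measurable.aestronglyMeasurable (by fun_prop))
    ((ae_restrict_iff' measurableSet_Ioi).2 (.of_forall fun y (hy : 0 < y) => ?_))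
  rw [norm_div, Real.norm_eq_abs, Real.norm_of_nonneg (by positivity), div_eq_mul_inv,
    ← Real.rpow_neg hy.le]
  exact mul_le_mul_of_nonneg_right (Real.abs_exp_neg_sub_one_le_min (by positivity))
    (Real.rpow_nonneg hy.le _)

lemma tendsto_exp_neg_mul_sub_one_mul_rpow_nhdsGT_zero {β : ℝ} (hβ : β < 1) {r : ℝ}
    (hr : 0 < r) : Tendsto (fun y : ℝ => (rexp (-(r * y)) - 1) * y ^ (-β)) (𝓝[>] 0) (𝓝 0) := by
  have hpow : Tendsto (fun y : ℝ => r * y ^ (1 - β)) (𝓝[>] 0) (𝓝 0) := by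
    have h := (Real.continuousAt_rpow_const 0 (1 - β) (Or.inr (by linarith))).tendsto
    rw [Real.zero_rpow (by linarith)] at h
    simpa using (h.mono_left nhdsWithin_le_nhds).const_mul r
  refine squeeze_zero_norm' ?_ hpow
  filter_upwards [self_mem_nhdsWithin] with y (hy : 0 < y)
  have hy_pow : y ^ (1 - β) = y * y ^ (-β) := by
    rw [sub_eq_add_neg, Real.rpow_add hy, Real.rpow_one]
  rw [norm_mul, Real.norm_eq_abs, Real.norm_of_nonneg (Real.rpow_nonneg hy.le _), hy_pow,
    ← mul_assoc]
  exact mul_le_mul_of_nonneg_right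
    ((Real.abs_exp_neg_sub_one_le_min (by positivity)).trans (min_le_left _ _))
    (Real.rpow_nonneg hy.le _)

lemma tendsto_exp_neg_mul_sub_one_mul_rpow_atTop {β : ℝ} (hβ : 0 < β) {r : ℝ} (hr : 0 < r) :
    Tendsto (fun y : ℝ => (rexp (-(r * y)) - 1) * y ^ (-β)) atTop (𝓝 0) := by
  have h := ((Real.tendsto_exp_neg_atTop_nhds_zero.comp
    (tendsto_id.const_mul_atTop hr)).sub_const 1).mul (tendsto_rpow_neg_atTop hβ)
  rwa [mul_zero] at h

lemma integral_exp_neg_mul_sub_one_div_rpow {β : ℝ} (hβ : β ∈ Ioo (0 : ℝ) 1) {r : ℝ}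
    (hr : 0 < r) : ∫ y in Ioi 0, (rexp (-(r * y)) - 1) / y ^ (1 + β) = Real.Gamma (-β) * r ^ β := by
  have hβ0 : β ≠ 0 := hβ.1.ne'
  have hu : ∀ y ∈ Ioi (0 : ℝ),
      HasDerivAt (fun y => rexp (-(r * y)) - 1) (-r * rexp (-(r * y))) y := fun y _ =>
    (((hasDerivAt_id y).const_mul r).neg.exp.sub_const 1).congr_deriv (by simp; ring)
  have hv : ∀ y ∈ Ioi (0 : ℝ), HasDerivAt (fun y => y ^ (-β)) (-β * (y ^ (1 + β))⁻¹) y :=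
    fun y (hy : 0 < y) => (Real.hasDerivAt_rpow_const (Or.inl hy.ne')).congr_deriv <| by
      rw [← Real.rpow_neg hy.le, neg_add_rev, ← sub_eq_add_neg]
  have hparts := integral_Ioi_mul_deriv_eq_deriv_mul hu hv
    (IntegrableOn.congr_fun ((integrableOn_exp_neg_mul_sub_one_div_rpow hβ hr).const_mul (-β))
      (fun y _ => by simp only [Pi.mul_apply]; ring) measurableSet_Ioi)
    (IntegrableOn.congr_fun ((integrableOn_rpow_mul_exp_neg_mul_rpow (by linarith [hβ.2] : -1 < -β)
      one_pos hr).const_mul (-r))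
      (fun y _ => by simp only [Pi.mul_apply, Real.rpow_one, neg_mul]; ring)
      measurableSet_Ioi)
    (tendsto_exp_neg_mul_sub_one_mul_rpow_nhdsGT_zero hβ.2 hr)
    (tendsto_exp_neg_mul_sub_one_mul_rpow_atTop hβ.1 hr)
  rw [sub_self, zero_sub, ← integral_neg] at hparts
  have hlhs : ∫ y in Ioi 0, (rexp (-(r * y)) - 1) * (-β * (y ^ (1 + β))⁻¹) =
      -β * ∫ y in Ioi 0, (rexp (-(r * y)) - 1) / y ^ (1 + β) := by
    rw [← integral_const_mul]
    congr 1 with y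
    ring
  have hrhs : ∫ y in Ioi 0, -(-r * rexp (-(r * y)) * y ^ (-β)) =
      -β * (Real.Gamma (-β) * r ^ β) := by
    calc ∫ y in Ioi 0, -(-r * rexp (-(r * y)) * y ^ (-β))
        = r * ∫ y in Ioi 0, y ^ (-β) * rexp (-(r * y)) := by
          rw [← integral_const_mul]
          congr 1 with y
          ring
      _ = r * (r ^ (β - 1) * (-β * Real.Gamma (-β))) := by
          rw [Real.integral_rpow_neg_mul_exp_neg_mul_Ioi hβ.2 hr,
            Real.Gamma_one_sub_eq_neg_mul_Gamma_neg hβ0]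
      _ = -β * (Real.Gamma (-β) * r ^ β) := by
          rw [Real.rpow_sub_one hr.ne']
          field_simp
  rw [hlhs, hrhs] at hparts
  exact mul_left_cancel₀ (neg_ne_zero.2 hβ0) hparts

lemma integral_levyIntegrand_ofReal {β : ℝ} (hβ : β ∈ Ioo (0 : ℝ) 1) {r : ℝ} (hr : 0 < r) :
    ∫ y in Ioi 0, levyIntegrand β r y = Real.Gamma (-β) * (r : ℂ) ^ (β : ℂ) := by
  have h : ∀ y : ℝ, levyIntegrand β r y = (((rexp (-(r * y)) - 1) / y ^ (1 + β) : ℝ) : ℂ) :=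
    fun y => by simp [levyIntegrand]
  simp_rw [h]
  rw [integral_complex_ofReal, integral_exp_neg_mul_sub_one_div_rpow hβ hr, ofReal_mul,
    ofReal_cpow hr.le]

lemma eqOn_integral_levyIntegrand_of_re_pos {β : ℝ} (hβ : β ∈ Ioo (0 : ℝ) 1) :
    EqOn (fun z : ℂ => ∫ y in Ioi 0, levyIntegrand β z y)
      (fun z => Real.Gamma (-β) * z ^ (β : ℂ)) {z | 0 < z.re} := by
  have hU : IsOpen {z : ℂ | 0 < z.re} := isOpen_lt continuous_const continuous_re
  have hpow : DifferentiableOn ℂ (fun z : ℂ => (Real.Gamma (-β) : ℂ) * z ^ (β : ℂ))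
      {z | 0 < z.re} := fun z hz =>
    ((differentiableAt_id.cpow (differentiableAt_const _) (Or.inl hz)).const_mul _)
      |>.differentiableWithinAt
  refine ((differentiableOn_integral_levyIntegrand hβ).analyticOnNhd hU)
    |>.eqOn_of_preconnected_of_frequently_eq (hpow.analyticOnNhd hU)
      (convex_halfSpace_re_gt 0).isPreconnected
    (by simp : (1 : ℂ) ∈ {z : ℂ | 0 < z.re}) ?_
  have hreal : Tendsto ((↑) : ℝ → ℂ) (𝓝[≠] 1) (𝓝[≠] 1) :=
    continuous_ofReal.continuousWithinAt.tendsto_nhdsWithin fun x hx => by simpa using hx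
  refine hreal.frequently (Eventually.frequently ?_)
  filter_upwards [nhdsWithin_le_nhds (lt_mem_nhds one_pos)] with r hr
    using integral_levyIntegrand_ofReal hβ hr

lemma integral_levyIntegrand {β : ℝ} (hβ : β ∈ Ioo (0 : ℝ) 1) {z : ℂ} (hz : 0 ≤ z.re) :
    ∫ y in Ioi 0, levyIntegrand β z y = Real.Gamma (-β) * z ^ (β : ℂ) := by
  have hpow : ContinuousOn (fun z : ℂ => (Real.Gamma (-β) : ℂ) * z ^ (β : ℂ))
      {z | 0 ≤ z.re} := fun z hz =>
    (continuousAt_const.mul (continuousAt_cpow_const_of_re_pos (Or.inl hz)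
      (by simpa using hβ.1))).continuousWithinAt
  refine (eqOn_integral_levyIntegrand_of_re_pos hβ).of_subset_closure
    (continuousOn_integral_levyIntegrand hβ) hpow (ofPred_subset_ofPred.2 fun _ => le_of_lt)
    (by rw [closure_setOfPred_lt_re]) hz

/-- For `β ∈ (0,1)` and `z ∈ ℂ₊`, the integral
`∫_0^∞ (e^{−zy} − 1)/(Γ(−β) y^{1+β}) dy` converges absolutely and equals `z^β`
(principal branch, `0^β = 0`). -/
theorem stmt8 (β : ℝ) (hβ : β ∈ Set.Ioo (0 : ℝ) 1) (z : ℂ) (hz : 0 ≤ z.re) :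
    IntegrableOn
      (fun y : ℝ => (Complex.exp (-(z * y)) - 1) /
        ((Real.Gamma (-β) : ℂ) * ((y ^ (1 + β) : ℝ) : ℂ)))
      (Set.Ioi 0) volume
    ∧ ∫ y in Set.Ioi (0 : ℝ),
        (Complex.exp (-(z * y)) - 1) /
          ((Real.Gamma (-β) : ℂ) * ((y ^ (1 + β) : ℝ) : ℂ))
      = z ^ ((β : ℝ) : ℂ) := by
  have hΓ : (Real.Gamma (-β) : ℂ) ≠ 0 := ofReal_ne_zero.2 (Real.Gamma_neg_ne_zero_of_mem_Ioo hβ)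
  have hF : (fun y : ℝ => (Complex.exp (-(z * y)) - 1) /
      ((Real.Gamma (-β) : ℂ) * ((y ^ (1 + β) : ℝ) : ℂ))) =
      fun y => levyIntegrand β z y / Real.Gamma (-β) :=
    funext fun y => div_mul_eq_div_div_swap _ _ _
  rw [hF, integral_div, integral_levyIntegrand hβ hz, mul_div_cancel_left₀ _ hΓ]
  exact ⟨(integrableOn_levyIntegrand hβ hz).div_const _, rfl⟩
end

section
/- Let β ∈ (0,1). For every z ∈ ℂ with Re z ≥ 0, the integral ∫_0^∞ (e^{−zy} − 1 + zy) / (Γ(−1−β) y^{2+β}) dy converges absolutely and equals z^{1+β}, where Γ is the Gamma function extended to negative non-integer arguments (note Γ(−1−β) > 0) and z^{1+β} is the principal-branch power with 0^{1+β} = 0. -/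
/-!
For real `z = x > 0`, two integrations by parts in `y` turn the integral into
`x² / (β (1 + β)) · ∫₀^∞ e^{-xy} y^{-β} dy = x^{1+β} Γ(1 - β) / (β (1 + β))`, and
`Γ(1 - β) = β (1 + β) Γ(-1 - β)`. Differentiating under the integral sign, both sides are
holomorphic on `Re z > 0`, so they agree there by the identity theorem. Both sides are continuous
on `Re z ≥ 0` (dominated convergence with the majorant `min(y, y²) y^{-2-β}`), which gives the
boundary, including `z = 0`.
-/

open MeasureTheory Complex Set Filter Topology

lemma Real.Gamma_one_sub_eq_mul_Gamma_neg_one_sub {β : ℝ} (hβ : β ≠ 0) (hβ' : 1 + β ≠ 0) :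
    Real.Gamma (1 - β) = β * (1 + β) * Real.Gamma (-1 - β) := by
  have h₁ := Real.Gamma_add_one (neg_ne_zero.2 hβ)
  have h₂ := Real.Gamma_add_one (s := -1 - β) (by contrapose! hβ'; linarith)
  rw [show -1 - β + 1 = -β by ring] at h₂
  rw [show 1 - β = -β + 1 by ring, h₁, h₂]
  ring

lemma Real.Gamma_neg_one_sub_pos_s9 {β : ℝ} (h0 : 0 < β) (h1 : β < 1) :
    0 < Real.Gamma (-1 - β) := by
  have h := Real.Gamma_pos_of_pos (sub_pos.2 h1)
  rw [Real.Gamma_one_sub_eq_mul_Gamma_neg_one_sub h0.ne' (by positivity)] at h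
  exact pos_of_mul_pos_right h (by positivity)

lemma integral_Ioi_eq_zero_of_hasDerivAt {E : Type*} [NormedAddCommGroup E] [NormedSpace ℝ E]
    [CompleteSpace E] {f f' : ℝ → E} {C C' p q : ℝ} (hp : 0 < p) (hq : q < 0) (hf0 : f 0 = 0)
    (hderiv : ∀ y ∈ Ioi 0, HasDerivAt f (f' y) y) (hint : IntegrableOn f' (Ioi 0))
    (hsmall : ∀ y ∈ Ioi 0, ‖f y‖ ≤ C * y ^ p) (hlarge : ∀ y ∈ Ioi 0, ‖f y‖ ≤ C' * y ^ q) :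
    ∫ y in Ioi 0, f' y = 0 := by
  have hcont : ContinuousWithinAt f (Ici 0) 0 := by
    rw [← continuousWithinAt_Ioi_iff_Ici, ContinuousWithinAt, hf0]
    have hlim : Tendsto (fun y : ℝ => C * y ^ p) (𝓝[>] 0) (𝓝 0) := by
      simpa [Real.zero_rpow hp.ne'] using
        ((Real.continuousAt_rpow_const 0 p (Or.inr hp.le)).tendsto.mono_left
          nhdsWithin_le_nhds).const_mul C
    exact squeeze_zero_norm' (eventually_nhdsWithin_of_forall hsmall) hlim
  have htop : Tendsto f atTop (𝓝 0) := by
    have hlim : Tendsto (fun y : ℝ => C' * y ^ q) atTop (𝓝 0) := by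
      simpa using (tendsto_rpow_neg_atTop (neg_pos.2 hq)).const_mul C'
    exact squeeze_zero_norm' ((eventually_gt_atTop 0).mono hlarge) hlim
  simpa [hf0] using integral_Ioi_of_hasDerivAt_of_tendsto hcont hderiv hint htop

lemma integrableOn_min_mul_rpow {β : ℝ} (h0 : 0 < β) (h1 : β < 1) :
    IntegrableOn (fun y : ℝ => min y (y ^ 2) * y ^ (-(2 + β))) (Ioi 0) := by
  rw [← Ioc_union_Ioi_eq_Ioi zero_le_one, integrableOn_union]
  constructor
  · refine ((intervalIntegral.intervalIntegrable_rpow' (r := -β) (by linarith)).1).congr_fun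
      (fun y hy => ?_) measurableSet_Ioc
    rw [min_eq_right (by nlinarith [hy.1, hy.2]), ← Real.rpow_two, ← Real.rpow_add hy.1]
    ring_nf
  · refine ((integrableOn_Ioi_rpow_iff (s := -(1 + β)) zero_lt_one).2 (by linarith)).congr_fun
      (fun y hy => ?_) measurableSet_Ioi
    have hy : (1 : ℝ) < y := hy
    rw [min_eq_left (by nlinarith), ← Real.rpow_one_add' (by positivity) (by linarith)]
    ring_nf

namespace Complex

lemma norm_exp_neg_le_one {w : ℂ} (hw : 0 ≤ w.re) : ‖cexp (-w)‖ ≤ 1 := by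
  simpa [norm_exp] using hw

lemma norm_exp_neg_sub_one_add_le {w : ℂ} (hw : 0 ≤ w.re) :
    ‖cexp (-w) - 1 + w‖ ≤ 3 * min ‖w‖ (‖w‖ ^ 2) := by
  rcases le_or_gt ‖w‖ 1 with hw1 | hw1
  · have h := norm_exp_sub_one_sub_id_le (x := -w) (by simpa using hw1)
    rw [sub_neg_eq_add, norm_neg] at h
    rw [min_eq_right (by nlinarith [norm_nonneg w])]
    nlinarith [sq_nonneg ‖w‖]
  · have h : ‖cexp (-w) - 1 + w‖ ≤ 2 + ‖w‖ :=
      (norm_add_le _ _).trans (by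
        gcongr
        exact (norm_sub_le _ _).trans (by rw [norm_one]; linarith [norm_exp_neg_le_one hw]))
    rw [min_eq_left (by nlinarith)]
    linarith

lemma norm_one_sub_exp_neg_le {w : ℂ} (hw : 0 ≤ w.re) :
    ‖1 - cexp (-w)‖ ≤ 2 * min 1 ‖w‖ := by
  rcases le_or_gt ‖w‖ 1 with hw1 | hw1
  · rw [min_eq_right hw1, norm_sub_rev]
    simpa using norm_exp_sub_one_le (x := -w) (by simpa using hw1)
  · rw [min_eq_left hw1.le]
    exact (norm_sub_le _ _).trans (by rw [norm_one]; linarith [norm_exp_neg_le_one hw])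

lemma re_mul_ofReal_nonneg {z : ℂ} (hz : 0 ≤ z.re) {y : ℝ} (hy : 0 ≤ y) : 0 ≤ (z * y).re := by
  rw [re_mul_ofReal]; positivity

lemma hasDerivAt_exp_neg_mul_ofReal (z : ℂ) (y : ℝ) :
    HasDerivAt (fun t : ℝ => cexp (-(z * t))) (-z * cexp (-(z * y))) y :=
  (((hasDerivAt_id (y : ℂ)).const_mul z).neg.cexp.comp_ofReal).congr_deriv (by simp; ring)

lemma norm_le_and_sub_lt_re_of_mem_ball {z w : ℂ} {r : ℝ} (hw : w ∈ Metric.ball z r) :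
    ‖w‖ ≤ ‖z‖ + r ∧ z.re - r < w.re := by
  rw [Metric.mem_ball, dist_eq_norm] at hw
  have hre := abs_lt.1 ((abs_re_le_norm (w - z)).trans_lt hw)
  rw [sub_re] at hre
  exact ⟨by linarith [norm_le_norm_add_norm_sub' w z], by linarith⟩

lemma frequently_eq_of_eq_on_pos_reals {f g : ℂ → ℂ} (h : ∀ x : ℝ, 0 < x → f x = g x) :
    ∃ᶠ w in 𝓝[≠] (1 : ℂ), f w = g w := by
  have htend : Tendsto ((↑) : ℝ → ℂ) (𝓝[≠] 1) (𝓝[≠] 1) :=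
    tendsto_nhdsWithin_of_tendsto_nhds_of_eventually_within _
      (by simpa using (continuous_ofReal.tendsto 1).mono_left nhdsWithin_le_nhds)
      (eventually_nhdsWithin_of_forall fun x hx => by simpa using hx)
  exact htend.frequently
    (eventually_nhdsWithin_of_eventually_nhds ((lt_mem_nhds one_pos).mono h)).frequently

end Complex

section StableIntegral

variable {β : ℝ}

noncomputable def stableIntegrand (β : ℝ) (z : ℂ) (y : ℝ) : ℂ :=
  (cexp (-(z * y)) - 1 + z * y) * (y ^ (-(2 + β)) : ℝ)

noncomputable def stableIntegrandDeriv (β : ℝ) (z : ℂ) (y : ℝ) : ℂ :=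
  (1 - cexp (-(z * y))) * (y ^ (-(1 + β)) : ℝ)

lemma norm_stableIntegrand_le {z : ℂ} (hz : 0 ≤ z.re) {y : ℝ} (hy : 0 < y) :
    ‖stableIntegrand β z y‖ ≤ 3 * (‖z‖ + ‖z‖ ^ 2) * (min y (y ^ 2) * y ^ (-(2 + β))) := by
  have hnum := norm_exp_neg_sub_one_add_le (re_mul_ofReal_nonneg hz hy.le)
  rw [norm_mul, norm_real, Real.norm_of_nonneg hy.le] at hnum
  have hmin : min (‖z‖ * y) ((‖z‖ * y) ^ 2) ≤ (‖z‖ + ‖z‖ ^ 2) * min y (y ^ 2) := by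
    rw [mul_min_of_nonneg _ _ (by positivity)]
    exact min_le_min (by nlinarith [norm_nonneg z]) (by nlinarith [norm_nonneg z, sq_nonneg y])
  rw [stableIntegrand, norm_mul, norm_real, Real.norm_of_nonneg (by positivity)]
  calc ‖cexp (-(z * y)) - 1 + z * y‖ * y ^ (-(2 + β))
      ≤ 3 * ((‖z‖ + ‖z‖ ^ 2) * min y (y ^ 2)) * y ^ (-(2 + β)) := by gcongr; linarith
    _ = 3 * (‖z‖ + ‖z‖ ^ 2) * (min y (y ^ 2) * y ^ (-(2 + β))) := by ring

lemma norm_stableIntegrandDeriv_le {z : ℂ} (hz : 0 ≤ z.re) {y : ℝ} (hy : 0 < y) :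
    ‖stableIntegrandDeriv β z y‖ ≤ 2 * (1 + ‖z‖) * (min y (y ^ 2) * y ^ (-(2 + β))) := by
  have hnum := norm_one_sub_exp_neg_le (re_mul_ofReal_nonneg hz hy.le)
  rw [norm_mul, norm_real, Real.norm_of_nonneg hy.le] at hnum
  have hmin : min 1 (‖z‖ * y) * y ≤ (1 + ‖z‖) * min y (y ^ 2) := by
    rw [min_mul_of_nonneg _ _ hy.le, mul_min_of_nonneg _ _ (by positivity)]
    exact min_le_min (by nlinarith [norm_nonneg z]) (by nlinarith [norm_nonneg z, sq_nonneg y])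
  rw [stableIntegrandDeriv, norm_mul, norm_real, Real.norm_of_nonneg (by positivity),
    show -(1 + β) = 1 + -(2 + β) by ring, Real.rpow_add hy, Real.rpow_one]
  calc ‖1 - cexp (-(z * y))‖ * (y * y ^ (-(2 + β)))
      ≤ 2 * min 1 (‖z‖ * y) * y * y ^ (-(2 + β)) := by rw [← mul_assoc]; gcongr
    _ = 2 * (min 1 (‖z‖ * y) * y) * y ^ (-(2 + β)) := by ring
    _ ≤ 2 * ((1 + ‖z‖) * min y (y ^ 2)) * y ^ (-(2 + β)) := by gcongr
    _ = 2 * (1 + ‖z‖) * (min y (y ^ 2) * y ^ (-(2 + β))) := by ring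

lemma measurable_stableIntegrand (β : ℝ) (z : ℂ) : Measurable (stableIntegrand β z) := by
  unfold stableIntegrand; fun_prop

lemma measurable_stableIntegrandDeriv (β : ℝ) (z : ℂ) : Measurable (stableIntegrandDeriv β z) := by
  unfold stableIntegrandDeriv; fun_prop

lemma integrableOn_stableIntegrand (h0 : 0 < β) (h1 : β < 1) {z : ℂ} (hz : 0 ≤ z.re) :
    IntegrableOn (stableIntegrand β z) (Ioi 0) :=
  ((integrableOn_min_mul_rpow h0 h1).const_mul _).mono'
    (measurable_stableIntegrand β z).aestronglyMeasurable
    ((ae_restrict_mem measurableSet_Ioi).mono fun _ hy => norm_stableIntegrand_le hz hy)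

lemma integrableOn_stableIntegrandDeriv (h0 : 0 < β) (h1 : β < 1) {z : ℂ} (hz : 0 ≤ z.re) :
    IntegrableOn (stableIntegrandDeriv β z) (Ioi 0) :=
  ((integrableOn_min_mul_rpow h0 h1).const_mul _).mono'
    (measurable_stableIntegrandDeriv β z).aestronglyMeasurable
    ((ae_restrict_mem measurableSet_Ioi).mono fun _ hy => norm_stableIntegrandDeriv_le hz hy)

lemma hasDerivAt_stableIntegrand {y : ℝ} (hy : 0 < y) (z : ℂ) :
    HasDerivAt (fun w => stableIntegrand β w y) (stableIntegrandDeriv β z y) z := by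
  have hnum := (((hasDerivAt_mul_const (y : ℂ)).neg.cexp.sub_const 1).add
    (hasDerivAt_mul_const (y : ℂ))).mul_const ((y ^ (-(2 + β)) : ℝ) : ℂ) (x := z)
  refine hnum.congr_deriv ?_
  rw [stableIntegrandDeriv, show -(1 + β) = 1 + -(2 + β) by ring, Real.rpow_add hy, Real.rpow_one]
  simp only [Pi.neg_apply]
  push_cast
  ring

lemma one_add_mul_integral_stableIntegrand (h0 : 0 < β) (h1 : β < 1) {z : ℂ} (hz : 0 ≤ z.re) :
    (1 + β) * ∫ y in Ioi 0, stableIntegrand β z y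
      = z * ∫ y in Ioi 0, stableIntegrandDeriv β z y := by
  have hI := integrableOn_stableIntegrand h0 h1 hz
  have hI' := integrableOn_stableIntegrandDeriv h0 h1 hz
  have key := integral_Ioi_eq_zero_of_hasDerivAt
    (f := fun y : ℝ => (cexp (-(z * y)) - 1 + z * y) * (y ^ (-(1 + β)) : ℝ))
    (f' := fun y => z * stableIntegrandDeriv β z y - (1 + β) * stableIntegrand β z y)
    (C := 3 * ‖z‖ ^ 2) (C' := 3 * ‖z‖) (p := 1 - β) (q := -β) (by linarith) (by linarith)
    (by simp) ?deriv ((hI'.const_mul z).sub (hI.const_mul _)) ?small ?large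
  · rw [integral_sub (hI'.const_mul z) (hI.const_mul _), integral_const_mul,
      integral_const_mul, sub_eq_zero] at key
    exact key.symm
  case deriv =>
    intro y hy
    have hnum : HasDerivAt (fun t : ℝ => cexp (-(z * t)) - 1 + z * t)
        (z * (1 - cexp (-(z * y)))) y :=
      (((hasDerivAt_exp_neg_mul_ofReal z y).sub_const 1).add
        (((hasDerivAt_id (y : ℂ)).const_mul z).comp_ofReal)).congr_deriv (by simp; ring)
    have hpow := (Real.hasDerivAt_rpow_const (p := -(1 + β)) (Or.inl (ne_of_gt hy))).ofReal_comp
    refine (hnum.mul hpow).congr_deriv ?_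
    simp only [stableIntegrand, stableIntegrandDeriv, show -(1 + β) - 1 = -(2 + β) by ring]
    push_cast
    ring
  all_goals
    intro y hy
    have hy : (0 : ℝ) < y := hy
    have hnum := norm_exp_neg_sub_one_add_le (re_mul_ofReal_nonneg hz hy.le)
    rw [norm_mul, norm_real, Real.norm_of_nonneg hy.le] at hnum
    rw [norm_mul, norm_real, Real.norm_of_nonneg (by positivity)]
  case small =>
    calc ‖cexp (-(z * y)) - 1 + z * y‖ * y ^ (-(1 + β))
        ≤ 3 * (‖z‖ * y) ^ 2 * y ^ (-(1 + β)) := by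
          gcongr; linarith [min_le_right (‖z‖ * y) ((‖z‖ * y) ^ 2)]
      _ = 3 * ‖z‖ ^ 2 * (y ^ 2 * y ^ (-(1 + β))) := by ring
      _ = 3 * ‖z‖ ^ 2 * y ^ (1 - β) := by
        rw [← Real.rpow_two y, ← Real.rpow_add hy]; ring_nf
  case large =>
    calc ‖cexp (-(z * y)) - 1 + z * y‖ * y ^ (-(1 + β))
        ≤ 3 * (‖z‖ * y) * y ^ (-(1 + β)) := by
          gcongr; linarith [min_le_left (‖z‖ * y) ((‖z‖ * y) ^ 2)]
      _ = 3 * ‖z‖ * (y * y ^ (-(1 + β))) := by ring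
      _ = 3 * ‖z‖ * y ^ (-β) := by
        rw [← Real.rpow_one_add' hy.le (by linarith)]; ring_nf

lemma integrableOn_exp_neg_mul_mul_rpow (h1 : β < 1) {z : ℂ} (hz : 0 < z.re) :
    IntegrableOn (fun y : ℝ => cexp (-(z * y)) * (y ^ (-β) : ℝ)) (Ioi 0) := by
  refine (integrableOn_rpow_mul_exp_neg_mul_rpow (s := -β) (by linarith) one_pos hz).mono'
    (by fun_prop : Measurable fun y : ℝ => cexp (-(z * y)) * (y ^ (-β) : ℝ)).aestronglyMeasurable
    ((ae_restrict_mem measurableSet_Ioi).mono fun y (hy : 0 < y) => le_of_eq ?_)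
  rw [norm_mul, norm_exp, norm_real, Real.norm_of_nonneg (by positivity), neg_re, re_mul_ofReal,
    Real.rpow_one, mul_comm, neg_mul]

lemma mul_integral_stableIntegrandDeriv (h0 : 0 < β) (h1 : β < 1) {z : ℂ} (hz : 0 < z.re) :
    β * ∫ y in Ioi 0, stableIntegrandDeriv β z y
      = z * ∫ y : ℝ in Ioi 0, cexp (-(z * y)) * (y ^ (-β) : ℝ) := by
  have hI := integrableOn_stableIntegrandDeriv h0 h1 hz.le
  have hI₀ := integrableOn_exp_neg_mul_mul_rpow h1 hz
  have key := integral_Ioi_eq_zero_of_hasDerivAt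
    (f := fun y : ℝ => (1 - cexp (-(z * y))) * (y ^ (-β) : ℝ))
    (f' := fun y => z * (cexp (-(z * y)) * (y ^ (-β) : ℝ)) - β * stableIntegrandDeriv β z y)
    (C := 2 * ‖z‖) (C' := 2) (p := 1 - β) (q := -β) (by linarith) (by linarith)
    (by simp) ?deriv ((hI₀.const_mul z).sub (hI.const_mul _)) ?small ?large
  · rw [integral_sub (hI₀.const_mul z) (hI.const_mul _), integral_const_mul,
      integral_const_mul, sub_eq_zero] at key
    exact key.symm
  case deriv =>
    intro y hy
    have hpow := (Real.hasDerivAt_rpow_const (p := -β) (Or.inl (ne_of_gt hy))).ofReal_comp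
    refine (((hasDerivAt_exp_neg_mul_ofReal z y).const_sub 1).mul hpow).congr_deriv ?_
    simp only [stableIntegrandDeriv, show -β - 1 = -(1 + β) by ring]
    push_cast
    ring
  all_goals
    intro y hy
    have hy : (0 : ℝ) < y := hy
    have hnum := norm_one_sub_exp_neg_le (re_mul_ofReal_nonneg hz.le hy.le)
    rw [norm_mul, norm_real, Real.norm_of_nonneg hy.le] at hnum
    rw [norm_mul, norm_real, Real.norm_of_nonneg (by positivity)]
  case small =>
    calc ‖1 - cexp (-(z * y))‖ * y ^ (-β)
        ≤ 2 * (‖z‖ * y) * y ^ (-β) := by gcongr; linarith [min_le_right 1 (‖z‖ * y)]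
      _ = 2 * ‖z‖ * (y * y ^ (-β)) := by ring
      _ = 2 * ‖z‖ * y ^ (1 - β) := by rw [← Real.rpow_one_add' hy.le (by linarith)]; ring_nf
  case large =>
    calc ‖1 - cexp (-(z * y))‖ * y ^ (-β)
        ≤ 2 * y ^ (-β) := by gcongr; linarith [min_le_left 1 (‖z‖ * y)]

lemma integral_exp_neg_mul_mul_rpow_ofReal (h1 : β < 1) {x : ℝ} (hx : 0 < x) :
    ∫ y : ℝ in Ioi 0, cexp (-(x * y)) * (y ^ (-β) : ℝ)
      = ((1 / x) ^ (1 - β) * Real.Gamma (1 - β) : ℝ) := by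
  rw [← Real.integral_rpow_mul_exp_neg_mul_Ioi (by linarith) hx, ← integral_complex_ofReal]
  refine setIntegral_congr_fun measurableSet_Ioi fun y _ => ?_
  rw [show 1 - β - 1 = -β by ring]
  push_cast
  ring

lemma integral_stableIntegrand_ofReal (h0 : 0 < β) (h1 : β < 1) {x : ℝ} (hx : 0 < x) :
    ∫ y in Ioi 0, stableIntegrand β x y = Real.Gamma (-1 - β) * (x : ℂ) ^ ((1 + β : ℝ) : ℂ) := by
  have hA := one_add_mul_integral_stableIntegrand h0 h1 (z := x) (by simp [hx.le])
  have hB := mul_integral_stableIntegrandDeriv h0 h1 (z := x) (by simpa)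
  rw [integral_exp_neg_mul_mul_rpow_ofReal h1 hx,
    Real.Gamma_one_sub_eq_mul_Gamma_neg_one_sub h0.ne' (by linarith)] at hB
  have hpow : x ^ (1 + β) = x * x * (1 / x) ^ (1 - β) := by
    rw [one_div, Real.inv_rpow hx.le, ← Real.rpow_neg hx.le, mul_assoc,
      ← Real.rpow_one_add' hx.le (by linarith), ← Real.rpow_one_add' hx.le (by linarith)]
    ring_nf
  have hβ : (β * (1 + β) : ℂ) ≠ 0 := by
    norm_cast; positivity
  refine mul_left_cancel₀ hβ ?_
  rw [← ofReal_cpow hx.le, hpow]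
  push_cast at hB ⊢
  linear_combination β * hA + x * hB

lemma hasDerivAt_integral_stableIntegrand (h0 : 0 < β) (h1 : β < 1) {z : ℂ} (hz : 0 < z.re) :
    HasDerivAt (fun w => ∫ y in Ioi 0, stableIntegrand β w y)
      (∫ y in Ioi 0, stableIntegrandDeriv β z y) z := by
  refine (hasDerivAt_integral_of_dominated_loc_of_deriv_le (Metric.ball_mem_nhds z hz)
    (Eventually.of_forall fun w => (measurable_stableIntegrand β w).aestronglyMeasurable)
    (integrableOn_stableIntegrand h0 h1 hz.le)
    (measurable_stableIntegrandDeriv β z).aestronglyMeasurable ?_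
    ((integrableOn_min_mul_rpow h0 h1).const_mul (2 * (1 + (‖z‖ + z.re))))
    ((ae_restrict_mem measurableSet_Ioi).mono fun y hy w _ => hasDerivAt_stableIntegrand hy w)).2
  filter_upwards [ae_restrict_mem measurableSet_Ioi] with y (hy : 0 < y) w hw
  obtain ⟨hnorm, hre⟩ := norm_le_and_sub_lt_re_of_mem_ball hw
  exact (norm_stableIntegrandDeriv_le (by linarith) hy).trans (by gcongr)

lemma continuousOn_integral_stableIntegrand (h0 : 0 < β) (h1 : β < 1) :
    ContinuousOn (fun z => ∫ y in Ioi 0, stableIntegrand β z y) {z | 0 ≤ z.re} := by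
  intro z _
  refine continuousWithinAt_of_dominated
    (Eventually.of_forall fun w => (measurable_stableIntegrand β w).aestronglyMeasurable) ?_
    ((integrableOn_min_mul_rpow h0 h1).const_mul (3 * ((‖z‖ + 1) + (‖z‖ + 1) ^ 2)))
    (Eventually.of_forall fun y => (by unfold stableIntegrand; fun_prop :
      Continuous fun w => stableIntegrand β w y).continuousWithinAt)
  filter_upwards [self_mem_nhdsWithin, mem_nhdsWithin_of_mem_nhds (Metric.ball_mem_nhds z one_pos)]
    with w (hw : 0 ≤ w.re) hwz
  filter_upwards [ae_restrict_mem measurableSet_Ioi] with y (hy : 0 < y)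
  have hnorm := (norm_le_and_sub_lt_re_of_mem_ball hwz).1
  exact (norm_stableIntegrand_le hw hy).trans (by gcongr)

theorem integral_stableIntegrand (h0 : 0 < β) (h1 : β < 1) {z : ℂ} (hz : 0 ≤ z.re) :
    ∫ y in Ioi 0, stableIntegrand β z y = Real.Gamma (-1 - β) * z ^ ((1 + β : ℝ) : ℂ) := by
  have hf : DifferentiableOn ℂ (fun z => ∫ y in Ioi 0, stableIntegrand β z y) {z | 0 < z.re} :=
    fun w hw =>
      (hasDerivAt_integral_stableIntegrand h0 h1 hw).differentiableAt.differentiableWithinAt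
  have hg : DifferentiableOn ℂ (fun z : ℂ => Real.Gamma (-1 - β) * z ^ ((1 + β : ℝ) : ℂ))
      {z | 0 < z.re} :=
    fun w hw => ((differentiableAt_id.cpow (differentiableAt_const _) (Or.inl hw)).const_mul
      _).differentiableWithinAt
  have hopen : IsOpen {z : ℂ | 0 < z.re} := isOpen_lt continuous_const continuous_re
  have heq := (hf.analyticOnNhd hopen).eqOn_of_preconnected_of_frequently_eq
    (hg.analyticOnNhd hopen) (convex_halfSpace_re_gt 0).isPreconnected (by simp)
    (frequently_eq_of_eq_on_pos_reals fun x hx => integral_stableIntegrand_ofReal h0 h1 hx)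
  refine heq.of_subset_closure (continuousOn_integral_stableIntegrand h0 h1) ?_
    (ofPred_subset_ofPred.2 fun _ => le_of_lt) (by rw [closure_setOfPred_lt_re]) hz
  exact fun w hw => (continuousAt_const.mul (continuousAt_cpow_const_of_re_pos (Or.inl hw)
    (by simp; linarith))).continuousWithinAt

end StableIntegral

/-- For `β ∈ (0,1)` and `z ∈ ℂ₊`, the integral
`∫_0^∞ (e^{−zy} − 1 + zy)/(Γ(−1−β) y^{2+β}) dy` converges absolutely and equals
`z^{1+β}` (principal branch, `0^{1+β} = 0`). -/
theorem stmt9 (β : ℝ) (hβ : β ∈ Set.Ioo (0 : ℝ) 1) (z : ℂ) (hz : 0 ≤ z.re) :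
    IntegrableOn
      (fun y : ℝ => (Complex.exp (-(z * y)) - 1 + z * y) /
        ((Real.Gamma (-1 - β) : ℂ) * ((y ^ (2 + β) : ℝ) : ℂ)))
      (Set.Ioi 0) volume
    ∧ ∫ y in Set.Ioi (0 : ℝ),
        (Complex.exp (-(z * y)) - 1 + z * y) /
          ((Real.Gamma (-1 - β) : ℂ) * ((y ^ (2 + β) : ℝ) : ℂ))
      = z ^ ((1 + β : ℝ) : ℂ) := by
  obtain ⟨h0, h1⟩ := hβ
  have hΓ : (Real.Gamma (-1 - β) : ℂ) ≠ 0 := ofReal_ne_zero.2 (Real.Gamma_neg_one_sub_pos_s9 h0 h1).ne'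
  have heq : EqOn (fun y : ℝ => stableIntegrand β z y / Real.Gamma (-1 - β))
      (fun y : ℝ => (cexp (-(z * y)) - 1 + z * y) /
        ((Real.Gamma (-1 - β) : ℂ) * ((y ^ (2 + β) : ℝ) : ℂ))) (Ioi 0) := fun y hy => by
    dsimp only
    rw [stableIntegrand, Real.rpow_neg (le_of_lt hy), ofReal_inv, mul_comm (Real.Gamma _ : ℂ),
      ← div_div, div_eq_mul_inv _ ((y ^ (2 + β) : ℝ) : ℂ)]
  refine ⟨IntegrableOn.congr_fun ((integrableOn_stableIntegrand h0 h1 hz).div_const _) heq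
    measurableSet_Ioi, ?_⟩
  rw [← setIntegral_congr_fun measurableSet_Ioi heq, integral_div,
    integral_stableIntegrand h0 h1 hz, mul_div_cancel_left₀ _ hΓ]
end

section
/- For every n ∈ ℕ (n ≥ 1) and every real x with −n < x < −n+1, the integral ∫_0^∞ t^{x−1} ( e^{−t} − ∑_{k=0}^{n−1} (−t)^k / k! ) dt converges absolutely and equals Γ(x), where Γ is the Gamma function analytically continued to negative non-integer arguments via the recursion Γ(x+1) = xΓ(x). -/
/-!
Write `R n t = expNegRemainder n t = e^{-t} - ∑_{k<n} (-t)^k / k!`, so that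
`R 0 t = e^{-t}` and `(R (n+1))' = -R n`. For `n = 0` the integral is Euler's integral
for `Γ(x)`, `x > 0`. For the inductive step, integrate `t^x R (n+1) t` by parts on `(0, ∞)`:
since `R (n+1) t = O(t^{n+1})` at `0` and `O(t^n)` at `∞`, the boundary terms vanish for
`-n-1 < x < -n`, and `x ∫ t^{x-1} R (n+1) t dt = ∫ t^x R n t dt = Γ(x+1) = x Γ(x)`.
-/

open MeasureTheory Real
open Set Filter Topology
open scoped Nat

noncomputable def expNegRemainder (n : ℕ) (t : ℝ) : ℝ :=
  exp (-t) - ∑ k ∈ Finset.range n, (-t) ^ k / k !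

section expNegRemainder

theorem expNegRemainder_zero (t : ℝ) : expNegRemainder 0 t = exp (-t) := by
  simp [expNegRemainder]

theorem expNegRemainder_succ (n : ℕ) (t : ℝ) :
    expNegRemainder (n + 1) t = expNegRemainder n t - (-t) ^ n / n ! := by
  rw [expNegRemainder, expNegRemainder, Finset.sum_range_succ]
  ring

theorem continuous_expNegRemainder (n : ℕ) : Continuous (expNegRemainder n) := by
  unfold expNegRemainder
  fun_prop

theorem hasDerivAt_expNegRemainder_succ (n : ℕ) (t : ℝ) :
    HasDerivAt (expNegRemainder (n + 1)) (-expNegRemainder n t) t := by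
  induction n with
  | zero =>
    have h : expNegRemainder 1 = fun s => exp (-s) - 1 := by
      funext s
      simp [expNegRemainder]
    rw [h, expNegRemainder_zero]
    simpa using (hasDerivAt_neg t).exp.sub_const 1
  | succ n ih =>
    have hmono : HasDerivAt (fun s : ℝ => (-s) ^ (n + 1) / (n + 1)!) (-((-t) ^ n / n !)) t := by
      refine (((hasDerivAt_neg t).pow (n + 1)).div_const ((n + 1)! : ℝ)).congr_deriv ?_
      rw [Nat.factorial_succ]
      push_cast
      field_simp
    rw [funext (expNegRemainder_succ (n + 1))]
    refine (ih.sub hmono).congr_deriv ?_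
    rw [expNegRemainder_succ]
    ring

theorem abs_expNegRemainder_le_of_abs_le_one {n : ℕ} (hn : 0 < n) {t : ℝ} (ht : |t| ≤ 1) :
    |expNegRemainder n t| ≤ (n + 1) / (n ! * n) * |t| ^ n := by
  have h := Real.exp_bound (x := -t) (by rwa [abs_neg]) hn
  rw [abs_neg, Nat.cast_succ, mul_comm] at h
  exact h

theorem abs_expNegRemainder_succ_le_of_one_le (n : ℕ) {t : ℝ} (ht : 1 ≤ t) :
    |expNegRemainder (n + 1) t| ≤ (n + 2) * t ^ n := by
  have ht0 : 0 ≤ t := zero_le_one.trans ht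
  have hexp : |exp (-t)| ≤ t ^ n := by
    rw [abs_of_pos (exp_pos _)]
    exact (exp_le_one_iff.mpr (neg_nonpos.mpr ht0)).trans (one_le_pow₀ ht)
  have hterm : ∀ k ∈ Finset.range (n + 1), |(-t) ^ k / k !| ≤ t ^ n := by
    intro k hk
    rw [abs_div, abs_pow, abs_neg, abs_of_nonneg ht0, Nat.abs_cast]
    calc t ^ k / k ! ≤ t ^ k := div_le_self (pow_nonneg ht0 k) (mod_cast k.factorial_pos)
      _ ≤ t ^ n := pow_le_pow_right₀ ht (Finset.mem_range_succ_iff.mp hk)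
  have hsum : |∑ k ∈ Finset.range (n + 1), (-t) ^ k / k !| ≤ (n + 1) * t ^ n := by
    refine (Finset.abs_sum_le_sum_abs _ _).trans ?_
    simpa using Finset.sum_le_card_nsmul _ _ _ hterm
  calc |expNegRemainder (n + 1) t| ≤ t ^ n + (n + 1) * t ^ n :=
        (abs_sub _ _).trans (add_le_add hexp hsum)
    _ = (n + 2) * t ^ n := by ring

end expNegRemainder

section RpowBounds

variable {E : Type*} [NormedAddCommGroup E]

theorem norm_rpow_mul_le {t y a C : ℝ} {k : ℕ} (ht : 0 < t) (h : |a| ≤ C * t ^ k) :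
    ‖t ^ y * a‖ ≤ C * t ^ (y + k) := by
  rw [norm_mul, norm_of_nonneg (rpow_nonneg ht.le y), Real.norm_eq_abs, rpow_add ht, rpow_natCast]
  calc t ^ y * |a| ≤ t ^ y * (C * t ^ k) := by gcongr
    _ = C * (t ^ y * t ^ k) := by ring

theorem integrableOn_Ioi_zero_of_norm_le_rpow {f : ℝ → E} (hf : ContinuousOn f (Ioi 0))
    {a b C D : ℝ} (ha : -1 < a) (hb : b < -1) (h0 : ∀ t ∈ Ioc (0 : ℝ) 1, ‖f t‖ ≤ C * t ^ a)
    (h1 : ∀ t ∈ Ioi (1 : ℝ), ‖f t‖ ≤ D * t ^ b) :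
    IntegrableOn f (Ioi 0) := by
  rw [← Ioc_union_Ioi_eq_Ioi zero_le_one]
  refine IntegrableOn.union ?_ ?_
  · have hint : IntegrableOn (fun t => C * t ^ a) (Ioc 0 1) :=
      ((intervalIntegrable_iff_integrableOn_Ioc_of_le zero_le_one).1
        (intervalIntegral.intervalIntegrable_rpow' ha)).const_mul C
    exact hint.mono' ((hf.mono Ioc_subset_Ioi_self).aestronglyMeasurable measurableSet_Ioc)
      ((ae_restrict_iff' measurableSet_Ioc).2 (ae_of_all _ h0))
  · exact ((integrableOn_Ioi_rpow_of_lt hb one_pos).const_mul D).mono'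
      ((hf.mono (Ioi_subset_Ioi zero_le_one)).aestronglyMeasurable measurableSet_Ioi)
      ((ae_restrict_iff' measurableSet_Ioi).2 (ae_of_all _ h1))

theorem tendsto_nhdsGT_zero_of_norm_le_rpow {f : ℝ → E} {a C : ℝ} (ha : 0 < a)
    (h : ∀ t ∈ Ioc (0 : ℝ) 1, ‖f t‖ ≤ C * t ^ a) :
    Tendsto f (𝓝[>] 0) (𝓝 0) := by
  have hlim : Tendsto (fun t : ℝ => C * t ^ a) (𝓝[>] 0) (𝓝 0) := by
    simpa [zero_rpow ha.ne'] using
      (((continuous_rpow_const ha.le).tendsto 0).const_mul C).mono_left nhdsWithin_le_nhds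
  exact squeeze_zero_norm' (eventually_of_mem (Ioc_mem_nhdsGT zero_lt_one) h) hlim

theorem tendsto_atTop_zero_of_norm_le_rpow {f : ℝ → E} {b C : ℝ} (hb : b < 0)
    (h : ∀ t ∈ Ioi (1 : ℝ), ‖f t‖ ≤ C * t ^ b) :
    Tendsto f atTop (𝓝 0) := by
  have hlim : Tendsto (fun t : ℝ => C * t ^ b) atTop (𝓝 0) := by
    simpa using (tendsto_rpow_neg_atTop (neg_pos.2 hb)).const_mul C
  exact squeeze_zero_norm' (eventually_of_mem (Ioi_mem_atTop 1) h) hlim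

end RpowBounds

section RpowMulExpNegRemainder

theorem continuousOn_rpow_mul_expNegRemainder (n : ℕ) (y : ℝ) :
    ContinuousOn (fun t => t ^ y * expNegRemainder n t) (Ioi 0) :=
  (continuousOn_id.rpow_const fun _ ht => Or.inl (ne_of_gt ht)).mul
    (continuous_expNegRemainder n).continuousOn

theorem norm_rpow_mul_expNegRemainder_le_of_le_one {n : ℕ} (hn : 0 < n) (y : ℝ) {t : ℝ}
    (ht : t ∈ Ioc 0 1) :
    ‖t ^ y * expNegRemainder n t‖ ≤ (n + 1) / (n ! * n) * t ^ (y + n) := by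
  have h := abs_expNegRemainder_le_of_abs_le_one hn (abs_le.2 ⟨by linarith [ht.1], ht.2⟩)
  rw [abs_of_pos ht.1] at h
  exact norm_rpow_mul_le ht.1 h

theorem norm_rpow_mul_expNegRemainder_succ_le_of_one_le (n : ℕ) (y : ℝ) {t : ℝ} (ht : 1 ≤ t) :
    ‖t ^ y * expNegRemainder (n + 1) t‖ ≤ (n + 2) * t ^ (y + n) :=
  norm_rpow_mul_le (zero_lt_one.trans_le ht) (abs_expNegRemainder_succ_le_of_one_le n ht)

theorem integrableOn_rpow_mul_expNegRemainder_succ {n : ℕ} {x : ℝ} (h1 : -(n + 1 : ℝ) < x)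
    (h2 : x < -n) :
    IntegrableOn (fun t => t ^ (x - 1) * expNegRemainder (n + 1) t) (Ioi 0) :=
  integrableOn_Ioi_zero_of_norm_le_rpow (continuousOn_rpow_mul_expNegRemainder _ _)
    (a := x - 1 + (n + 1 : ℕ)) (b := x - 1 + n) (by push_cast; linarith) (by linarith)
    (fun _ ht => norm_rpow_mul_expNegRemainder_le_of_le_one n.succ_pos _ ht)
    (fun _ ht => norm_rpow_mul_expNegRemainder_succ_le_of_one_le n _ (le_of_lt ht))

theorem mul_integral_rpow_mul_expNegRemainder_succ {n : ℕ} {x : ℝ} (h1 : -(n + 1 : ℝ) < x)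
    (h2 : x < -n) (hint : IntegrableOn (fun t => t ^ x * expNegRemainder n t) (Ioi 0)) :
    x * ∫ t in Ioi 0, t ^ (x - 1) * expNegRemainder (n + 1) t =
      ∫ t in Ioi 0, t ^ x * expNegRemainder n t := by
  have hx : x ≠ 0 := by linarith [n.cast_nonneg (α := ℝ)]
  set g : ℝ → ℝ := fun t => t ^ x * expNegRemainder (n + 1) t with hg
  have hderiv : ∀ t ∈ Ioi (0 : ℝ), HasDerivAt g
      (x * (t ^ (x - 1) * expNegRemainder (n + 1) t) - t ^ x * expNegRemainder n t) t := by
    intro t ht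
    refine ((hasDerivAt_rpow_const (Or.inl (ne_of_gt ht))).mul
      (hasDerivAt_expNegRemainder_succ n t)).congr_deriv ?_
    ring
  have hg0 : g 0 = 0 := by simp [hg, zero_rpow hx]
  have hcont : ContinuousWithinAt g (Ici 0) 0 := by
    rw [← continuousWithinAt_Ioi_iff_Ici, ContinuousWithinAt, hg0]
    exact tendsto_nhdsGT_zero_of_norm_le_rpow (a := x + (n + 1 : ℕ)) (by push_cast; linarith)
      fun _ ht => norm_rpow_mul_expNegRemainder_le_of_le_one n.succ_pos x ht
  have htop : Tendsto g atTop (𝓝 0) :=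
    tendsto_atTop_zero_of_norm_le_rpow (b := x + n) (by linarith)
      fun _ ht => norm_rpow_mul_expNegRemainder_succ_le_of_one_le n x (le_of_lt ht)
  have hint' := (integrableOn_rpow_mul_expNegRemainder_succ h1 h2).const_mul x
  have hFTC := integral_Ioi_of_hasDerivAt_of_tendsto hcont hderiv (hint'.sub hint) htop
  rw [integral_sub hint' hint, integral_const_mul, hg0, sub_zero, sub_eq_zero] at hFTC
  exact hFTC

theorem integrableOn_and_integral_rpow_mul_expNegRemainder_eq_Gamma (n : ℕ) {x : ℝ}
    (h1 : -(n : ℝ) < x) (h2 : x < -n + 1) :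
    IntegrableOn (fun t => t ^ (x - 1) * expNegRemainder n t) (Ioi 0) ∧
      ∫ t in Ioi 0, t ^ (x - 1) * expNegRemainder n t = Gamma x := by
  induction n generalizing x with
  | zero =>
    rw [Nat.cast_zero, neg_zero] at h1
    simp only [expNegRemainder_zero, mul_comm _ (exp _)]
    exact ⟨GammaIntegral_convergent h1, (Gamma_eq_integral h1).symm⟩
  | succ n ih =>
    push_cast at h1 h2
    have hx : x ≠ 0 := by linarith [n.cast_nonneg (α := ℝ)]
    obtain ⟨hint, hval⟩ := ih (x := x + 1) (by linarith) (by linarith)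
    rw [add_sub_cancel_right] at hint hval
    refine ⟨integrableOn_rpow_mul_expNegRemainder_succ h1 (by linarith), ?_⟩
    have h := mul_integral_rpow_mul_expNegRemainder_succ h1 (by linarith) hint
    rw [hval, Gamma_add_one hx] at h
    exact mul_left_cancel₀ hx h

end RpowMulExpNegRemainder

theorem stmt10_general (n : ℕ) (x : ℝ)
    (hx1 : -(n : ℝ) < x) (hx2 : x < -(n : ℝ) + 1) :
    IntegrableOn
      (fun t : ℝ => t ^ (x - 1) *
        (Real.exp (-t) - ∑ k ∈ Finset.range n, (-t) ^ k / (Nat.factorial k)))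
      (Set.Ioi 0) volume
    ∧ ∫ t in Set.Ioi (0 : ℝ),
        t ^ (x - 1) *
          (Real.exp (-t) - ∑ k ∈ Finset.range n, (-t) ^ k / (Nat.factorial k))
      = Real.Gamma x :=
  integrableOn_and_integral_rpow_mul_expNegRemainder_eq_Gamma n hx1 hx2

/-- For `n ≥ 1` and `−n < x < −n+1`, the integral
`∫_0^∞ t^{x−1}(e^{−t} − ∑_{k=0}^{n−1} (−t)^k/k!) dt` converges absolutely and
equals `Γ(x)`, the Gamma function analytically continued via `Γ(x+1) = xΓ(x)`. -/
theorem stmt10 (n : ℕ) (hn : 1 ≤ n) (x : ℝ)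
    (hx1 : -(n : ℝ) < x) (hx2 : x < -(n : ℝ) + 1) :
    IntegrableOn
      (fun t : ℝ => t ^ (x - 1) *
        (Real.exp (-t) - ∑ k ∈ Finset.range n, (-t) ^ k / (Nat.factorial k)))
      (Set.Ioi 0) volume
    ∧ ∫ t in Set.Ioi (0 : ℝ),
        t ^ (x - 1) *
          (Real.exp (-t) - ∑ k ∈ Finset.range n, (-t) ^ k / (Nat.factorial k))
      = Real.Gamma x :=
  stmt10_general n x hx1 hx2
end

section
/- Let d ∈ ℕ, σ, b > 0, and let φ be the Gaussian density on ℝ^d and (P_t)_{t≥0} the Mehler (Ornstein–Uhlenbeck) semigroup P_t f(x) = ∫_{ℝ^d} f(x e^{−bt} + y √(1 − e^{−2bt})) φ(y) dy. Let f : ℝ^d → ℝ be continuously differentiable such that f and each partial derivative ∂_j f (1 ≤ j ≤ d) are of polynomial growth (i.e. bounded by C(1+|x|)^n for some C > 0, n ∈ ℕ). Then for every t ≥ 0, P_t f is differentiable on ℝ^d and ∂_j (P_t f)(x) = e^{−bt} P_t(∂_j f)(x) for all j ∈ {1,…,d} and x ∈ ℝ^d. -/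
open MeasureTheory

/-!
Differentiation under the integral sign. For fixed `y` the integrand
`x ↦ f (a • x + c • y) * φ y` has derivative `a • φ y • Df (a • x + c • y)`; for `x` in a unit ball
this is dominated by `(1 + ‖y‖) ^ n * φ y`, which is integrable because a Gaussian beats every
polynomial. Polynomial growth of `Df` itself follows from that of the partial derivatives, since
the operator norm is controlled by the values on a basis.
-/

section PolynomialGrowth

variable {E F G : Type*} [NormedAddCommGroup E] [NormedAddCommGroup F] [NormedAddCommGroup G]

def PolynomialGrowth (g : E → F) : Prop :=
  ∃ C ≥ (0 : ℝ), ∃ n : ℕ, ∀ x, ‖g x‖ ≤ C * (1 + ‖x‖) ^ n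

lemma polynomialGrowth_zero : PolynomialGrowth (0 : E → F) :=
  ⟨0, le_rfl, 0, fun x => by simp⟩

lemma PolynomialGrowth.norm {g : E → F} (hg : PolynomialGrowth g) :
    PolynomialGrowth fun x => ‖g x‖ := by
  simpa [PolynomialGrowth] using hg

lemma PolynomialGrowth.add {g h : E → F} (hg : PolynomialGrowth g) (hh : PolynomialGrowth h) :
    PolynomialGrowth (g + h) := by
  obtain ⟨C, hC, m, hgC⟩ := hg
  obtain ⟨D, hD, n, hhD⟩ := hh
  refine ⟨C + D, add_nonneg hC hD, max m n, fun x => ?_⟩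
  have h1 : 1 ≤ 1 + ‖x‖ := le_add_of_nonneg_right (norm_nonneg x)
  calc ‖g x + h x‖ ≤ C * (1 + ‖x‖) ^ m + D * (1 + ‖x‖) ^ n :=
        (norm_add_le _ _).trans (add_le_add (hgC x) (hhD x))
    _ ≤ C * (1 + ‖x‖) ^ max m n + D * (1 + ‖x‖) ^ max m n := by
        gcongr <;> first | exact h1 | omega
    _ = (C + D) * (1 + ‖x‖) ^ max m n := by ring

lemma PolynomialGrowth.finset_sum {ι : Type*} (s : Finset ι) {g : ι → E → F}
    (hg : ∀ i ∈ s, PolynomialGrowth (g i)) : PolynomialGrowth fun x => ∑ i ∈ s, g i x := by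
  classical
  induction s using Finset.induction_on with
  | empty => exact polynomialGrowth_zero
  | insert i s hi ih =>
    simp only [Finset.sum_insert hi]
    exact (hg i (s.mem_insert_self i)).add (ih fun j hj => hg j (Finset.mem_insert_of_mem hj))

lemma PolynomialGrowth.of_norm_le {g : E → F} {h : E → G} (hh : PolynomialGrowth h) {K : ℝ}
    (hK : 0 ≤ K) (hgh : ∀ x, ‖g x‖ ≤ K * ‖h x‖) : PolynomialGrowth g := by
  obtain ⟨C, hC, n, hhC⟩ := hh
  refine ⟨K * C, mul_nonneg hK hC, n, fun x => ?_⟩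
  calc ‖g x‖ ≤ K * ‖h x‖ := hgh x
    _ ≤ K * (C * (1 + ‖x‖) ^ n) := by gcongr; exact hhC x
    _ = K * C * (1 + ‖x‖) ^ n := by ring

lemma polynomialGrowth_of_basis [NormedSpace ℝ F] [NormedSpace ℝ G]
    {ι : Type*} [Fintype ι] (v : Module.Basis ι ℝ F) {L : E → F →L[ℝ] G}
    (hL : ∀ i, PolynomialGrowth fun x => L x (v i)) : PolynomialGrowth L := by
  refine (PolynomialGrowth.finset_sum Finset.univ fun i _ => (hL i).norm).of_norm_le
    (nsmul_nonneg (norm_nonneg v.equivFunL.toContinuousLinearMap) (Fintype.card ι)) fun x => ?_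
  rw [Real.norm_of_nonneg (by positivity)]
  exact v.opNorm_le (by positivity) fun i =>
    Finset.single_le_sum (f := fun i => ‖L x (v i)‖) (fun _ _ => norm_nonneg _)
      (Finset.mem_univ i)

end PolynomialGrowth

section GaussianMoments

variable {V : Type*} [NormedAddCommGroup V] [InnerProductSpace ℝ V] [FiniteDimensional ℝ V]
  [MeasurableSpace V] [BorelSpace V]

lemma integrable_exp_neg_mul_sq_norm {k : ℝ} (hk : 0 < k) :
    Integrable fun y : V => Real.exp (-k * ‖y‖ ^ 2) := by
  refine Integrable.of_integral_ne_zero ?_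
  rw [GaussianFourier.integral_rexp_neg_mul_sq_norm hk]
  exact (Real.rpow_pos_of_pos (by positivity) _).ne'

lemma one_add_pow_mul_exp_neg_mul_sq_le {k : ℝ} (hk : 0 < k) (n : ℕ) {r : ℝ} (hr : 0 ≤ r) :
    (1 + r) ^ n * Real.exp (-k * r ^ 2) ≤
      Real.exp (n ^ 2 / (2 * k)) * Real.exp (-(k / 2) * r ^ 2) := by
  have h_pow : (1 + r) ^ n ≤ Real.exp (n * r) := by
    calc (1 + r) ^ n ≤ Real.exp r ^ n := by
          gcongr; linarith [Real.add_one_le_exp r]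
      _ = Real.exp (n * r) := by rw [← Real.exp_nat_mul]
  -- completing the square: `n r - k r² / 2 ≤ n² / (2k)`
  have h_sq : n * r - k / 2 * r ^ 2 ≤ n ^ 2 / (2 * k) := by
    rw [le_div_iff₀ (by positivity)]
    nlinarith [sq_nonneg (k * r - n)]
  calc (1 + r) ^ n * Real.exp (-k * r ^ 2) ≤ Real.exp (n * r) * Real.exp (-k * r ^ 2) := by
        gcongr
    _ = Real.exp ((n * r - k / 2 * r ^ 2) + -(k / 2) * r ^ 2) := by
        rw [← Real.exp_add]; ring_nf
    _ ≤ Real.exp (n ^ 2 / (2 * k) + -(k / 2) * r ^ 2) := by gcongr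
    _ = Real.exp (n ^ 2 / (2 * k)) * Real.exp (-(k / 2) * r ^ 2) := Real.exp_add _ _

lemma integrable_one_add_norm_pow_mul_exp_neg_mul_sq_norm {k : ℝ} (hk : 0 < k) (n : ℕ) :
    Integrable fun y : V => (1 + ‖y‖) ^ n * Real.exp (-k * ‖y‖ ^ 2) := by
  refine ((integrable_exp_neg_mul_sq_norm (half_pos hk)).const_mul
    (Real.exp (n ^ 2 / (2 * k)))).mono' (by fun_prop) (Filter.Eventually.of_forall fun y => ?_)
  rw [Real.norm_of_nonneg (by positivity)]
  exact one_add_pow_mul_exp_neg_mul_sq_le hk n (norm_nonneg y)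

end GaussianMoments

section AffineWeightedIntegral

variable {E F : Type*} [NormedAddCommGroup E] [NormedSpace ℝ E] [NormedAddCommGroup F]
  [NormedSpace ℝ F] {w : E → ℝ}

lemma one_add_norm_add_smul_le (u y : E) (c : ℝ) :
    1 + ‖u + c • y‖ ≤ (1 + ‖u‖ + |c|) * (1 + ‖y‖) := by
  have := norm_add_le u (c • y)
  rw [norm_smul, Real.norm_eq_abs] at this
  nlinarith [norm_nonneg u, norm_nonneg y, abs_nonneg c]

lemma norm_smul_comp_add_smul_le {g : E → F} {C : ℝ} (hC : 0 ≤ C) {n : ℕ}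
    (hg : ∀ x, ‖g x‖ ≤ C * (1 + ‖x‖) ^ n) {u : E} {R : ℝ} (hu : ‖u‖ ≤ R) (c : ℝ) (y : E) :
    ‖w y • g (u + c • y)‖ ≤ C * (1 + R + |c|) ^ n * ‖(1 + ‖y‖) ^ n * w y‖ := by
  have h_arg : 1 + ‖u + c • y‖ ≤ (1 + R + |c|) * (1 + ‖y‖) :=
    (one_add_norm_add_smul_le u y c).trans (by gcongr)
  rw [norm_smul, norm_mul, Real.norm_of_nonneg (by positivity : (0 : ℝ) ≤ (1 + ‖y‖) ^ n)]
  calc ‖w y‖ * ‖g (u + c • y)‖ ≤ ‖w y‖ * (C * ((1 + R + |c|) * (1 + ‖y‖)) ^ n) := by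
        gcongr
        exact (hg _).trans (by gcongr)
    _ = C * (1 + R + |c|) ^ n * ((1 + ‖y‖) ^ n * ‖w y‖) := by rw [mul_pow]; ring

variable [MeasurableSpace E] [OpensMeasurableSpace E] {μ : Measure E}

lemma integrable_smul_comp_add_smul [SecondCountableTopologyEither E F]
    (hw : ∀ n : ℕ, Integrable (fun y => (1 + ‖y‖) ^ n * w y) μ) {g : E → F} (hg : Continuous g)
    (hg_growth : PolynomialGrowth g) (u : E) (c : ℝ) :
    Integrable (fun y => w y • g (u + c • y)) μ := by
  obtain ⟨C, hC, n, hgC⟩ := hg_growth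
  have hw_meas : AEStronglyMeasurable w μ := by simpa using (hw 0).aestronglyMeasurable
  exact ((hw n).norm.const_mul _).mono' (hw_meas.smul (hg.comp (by fun_prop)).aestronglyMeasurable)
    (Filter.Eventually.of_forall (norm_smul_comp_add_smul_le hC hgC le_rfl c))

lemma hasFDerivAt_integral_smul_comp_add_smul [SecondCountableTopology E] [CompleteSpace F]
    (hw : ∀ n : ℕ, Integrable (fun y => (1 + ‖y‖) ^ n * w y) μ) {f : E → F}
    (hf : ContDiff ℝ 1 f) (hf_growth : PolynomialGrowth f)
    (hf'_growth : PolynomialGrowth (fderiv ℝ f)) (a c : ℝ) (x₀ : E) :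
    HasFDerivAt (fun x => ∫ y, w y • f (a • x + c • y) ∂μ)
      (a • ∫ y, w y • fderiv ℝ f (a • x₀ + c • y) ∂μ) x₀ := by
  obtain ⟨C, hC, n, hf'C⟩ := hf'_growth
  have hf'_cont : Continuous (fderiv ℝ f) := hf.continuous_fderiv one_ne_zero
  rw [← integral_smul]
  refine hasFDerivAt_integral_of_dominated_of_fderiv_le (Metric.ball_mem_nhds x₀ one_pos)
    (F := fun x y => w y • f (a • x + c • y))
    (F' := fun x y => a • (w y • fderiv ℝ f (a • x + c • y)))
    (bound := fun y => |a| * (C * (1 + |a| * (‖x₀‖ + 1) + |c|) ^ n * ‖(1 + ‖y‖) ^ n * w y‖))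
    (Filter.Eventually.of_forall fun x =>
      (integrable_smul_comp_add_smul hw hf.continuous hf_growth _ c).aestronglyMeasurable)
    (integrable_smul_comp_add_smul hw hf.continuous hf_growth _ c)
    ((integrable_smul_comp_add_smul hw hf'_cont ⟨C, hC, n, hf'C⟩ _ c).smul a).aestronglyMeasurable
    (Filter.Eventually.of_forall fun y x hx => ?_) (((hw n).norm.const_mul _).const_mul _)
    (Filter.Eventually.of_forall fun y x _ => ?_)
  · have hax : ‖a • x‖ ≤ |a| * (‖x₀‖ + 1) := by
      rw [norm_smul, Real.norm_eq_abs]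
      gcongr
      linarith [norm_le_norm_add_norm_sub' x x₀, (mem_ball_iff_norm.mp hx).le]
    rw [norm_smul, Real.norm_eq_abs]
    gcongr
    exact norm_smul_comp_add_smul_le hC hf'C hax c y
  · have h_affine : HasFDerivAt (fun x : E => a • x + c • y) (a • ContinuousLinearMap.id ℝ E) x :=
      ((hasFDerivAt_id x).const_smul a).add_const _
    refine (((hf.differentiable one_ne_zero _).hasFDerivAt.comp x h_affine).const_smul
      (w y)).congr_fderiv ?_
    ext v
    simp [smul_comm a (w y)]

end AffineWeightedIntegral

theorem stmt12_general (d : ℕ) (σ b : ℝ) (hσ : 0 < σ) (hb : 0 < b)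
    (φ : EuclideanSpace ℝ (Fin d) → ℝ)
    (hφ : ∀ x, φ x = (b / (Real.pi * σ ^ 2)) ^ ((d : ℝ) / 2) *
        Real.exp (-(b / σ ^ 2) * ‖x‖ ^ 2))
    (P : ℝ → (EuclideanSpace ℝ (Fin d) → ℝ) → EuclideanSpace ℝ (Fin d) → ℝ)
    (hP : ∀ t g x, P t g x =
        ∫ y, g (Real.exp (-(b * t)) • x + Real.sqrt (1 - Real.exp (-(2 * b * t))) • y)
          * φ y ∂volume)
    (f : EuclideanSpace ℝ (Fin d) → ℝ)
    (hf : ContDiff ℝ 1 f)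
    (hfgrowth : ∃ C : ℝ, 0 < C ∧ ∃ n : ℕ, ∀ x, |f x| ≤ C * (1 + ‖x‖) ^ n)
    (hdfgrowth : ∀ j : Fin d, ∃ C : ℝ, 0 < C ∧ ∃ n : ℕ, ∀ x,
        |fderiv ℝ f x (EuclideanSpace.single j 1)| ≤ C * (1 + ‖x‖) ^ n)
    (t : ℝ) :
    Differentiable ℝ (P t f) ∧
    ∀ j : Fin d, ∀ x,
      fderiv ℝ (P t f) x (EuclideanSpace.single j 1)
        = Real.exp (-(b * t)) *
            P t (fun z => fderiv ℝ f z (EuclideanSpace.single j 1)) x := by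
  set a := Real.exp (-(b * t))
  set c := Real.sqrt (1 - Real.exp (-(2 * b * t)))
  have hφ_moments (n : ℕ) : Integrable fun y => (1 + ‖y‖) ^ n * φ y := by
    simp_rw [hφ, mul_left_comm _ (_ ^ ((d : ℝ) / 2))]
    exact (integrable_one_add_norm_pow_mul_exp_neg_mul_sq_norm (by positivity) n).const_mul _
  have hf_growth : PolynomialGrowth f := by
    obtain ⟨C, hC, n, hfC⟩ := hfgrowth
    exact ⟨C, hC.le, n, hfC⟩
  have hf'_growth : PolynomialGrowth (fderiv ℝ f) :=
    polynomialGrowth_of_basis (EuclideanSpace.basisFun (Fin d) ℝ).toBasis fun j => by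
      obtain ⟨C, hC, n, hC'⟩ := hdfgrowth j
      exact ⟨C, hC.le, n, by simpa using hC'⟩
  have hPf : P t f = fun x => ∫ y, φ y • f (a • x + c • y) := by
    ext x
    simp only [hP, smul_eq_mul, mul_comm (φ _)]
    rfl
  have hderiv (x) := hasFDerivAt_integral_smul_comp_add_smul hφ_moments hf hf_growth hf'_growth a c x
  rw [hPf]
  refine ⟨fun x => (hderiv x).differentiableAt, fun j x => ?_⟩
  rw [(hderiv x).fderiv, smul_apply, ContinuousLinearMap.integral_apply
    (integrable_smul_comp_add_smul hφ_moments (hf.continuous_fderiv one_ne_zero) hf'_growth _ c),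
    hP, smul_eq_mul]
  simp only [smul_apply, smul_eq_mul, mul_comm (φ _)]
  rfl

/-- For the Mehler (Ornstein–Uhlenbeck) semigroup
`P_t f(x) = ∫ f(x e^{−bt} + y √(1−e^{−2bt})) φ(y) dy` with Gaussian density `φ`,
if `f` is `C¹` and `f` and all its partial derivatives are of polynomial growth,
then `P_t f` is differentiable and `∂_j(P_t f)(x) = e^{−bt} P_t(∂_j f)(x)`. -/
theorem stmt12 (d : ℕ) (hd : 0 < d) (σ b : ℝ) (hσ : 0 < σ) (hb : 0 < b)
    (φ : EuclideanSpace ℝ (Fin d) → ℝ)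
    (hφ : ∀ x, φ x = (b / (Real.pi * σ ^ 2)) ^ ((d : ℝ) / 2) *
        Real.exp (-(b / σ ^ 2) * ‖x‖ ^ 2))
    (P : ℝ → (EuclideanSpace ℝ (Fin d) → ℝ) → EuclideanSpace ℝ (Fin d) → ℝ)
    (hP : ∀ t g x, P t g x =
        ∫ y, g (Real.exp (-(b * t)) • x + Real.sqrt (1 - Real.exp (-(2 * b * t))) • y)
          * φ y ∂volume)
    (f : EuclideanSpace ℝ (Fin d) → ℝ)
    (hf : ContDiff ℝ 1 f)
    (hfgrowth : ∃ C : ℝ, 0 < C ∧ ∃ n : ℕ, ∀ x, |f x| ≤ C * (1 + ‖x‖) ^ n)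
    (hdfgrowth : ∀ j : Fin d, ∃ C : ℝ, 0 < C ∧ ∃ n : ℕ, ∀ x,
        |fderiv ℝ f x (EuclideanSpace.single j 1)| ≤ C * (1 + ‖x‖) ^ n)
    (t : ℝ) (ht : 0 ≤ t) :
    Differentiable ℝ (P t f) ∧
    ∀ j : Fin d, ∀ x,
      fderiv ℝ (P t f) x (EuclideanSpace.single j 1)
        = Real.exp (-(b * t)) *
            P t (fun z => fderiv ℝ f z (EuclideanSpace.single j 1)) x :=
  stmt12_general d σ b hσ hb φ hφ P hP f hf hfgrowth hdfgrowth t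
end

section
/- Let ψ be a branching mechanism with parameters α, ρ, π such that there exists z > 0 with ψ(z) > 0, and assume Grey's condition. Let v̄ := sup{λ ≥ 0 : ψ(λ) = 0} (so v̄ ∈ (0,∞)). Then: (i) for every t > 0 there is a unique v̄_t ∈ (v̄, ∞) with ∫_{v̄_t}^∞ ψ(z)^{−1} dz = t; and (ii) there exist constants C, δ, t₀ > 0 such that 0 < v̄_t − v̄ ≤ C e^{−δ t} for all t ≥ t₀. -/
/-!
The mechanism `ψ` is convex on `[0, ∞)` (its jump part is an integral of convex functions) and
`ψ z / z → -α` as `z ↓ 0`, so `ψ` is negative somewhere near `0`, while Grey's condition makes it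
positive far out. Hence `v̄` is the unique positive root, and the secants through `(v̄, 0)` give
`m (z - v̄) ≤ ψ z` for all `z > v̄` and `ψ z ≤ M (z - v̄)` on `(v̄, b]`.

The tail integral `T v = ∫_v^∞ ψ⁻¹` is continuous and strictly decreasing on `(v̄, ∞)` and tends
to `0` at `∞`; comparing with `∫ dz / (M (z - v̄))` shows `T v ≥ M⁻¹ log ((b - v̄) / (v - v̄)) → ∞`
as `v ↓ v̄`, which gives (i). Comparing with `∫ dz / (m (z - v̄))` instead gives
`T v - T (v̄ + 1) ≤ -m⁻¹ log (v - v̄)`, i.e. `v̄_t - v̄ ≤ e^{m T (v̄ + 1)} e^{-m t}`.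
-/

open MeasureTheory Set Filter Topology

section ExpBounds

open Real

lemma exp_neg_sub_one_add_nonneg (x : ℝ) : 0 ≤ exp (-x) - 1 + x := by
  linarith [add_one_le_exp (-x)]

lemma exp_neg_sub_one_add_le_min {x : ℝ} (hx : 0 ≤ x) :
    exp (-x) - 1 + x ≤ min x (x ^ 2) := by
  have hexp : exp (-x) ≤ 1 := exp_le_one_iff.2 (neg_nonpos.2 hx)
  refine le_min (by linarith) ?_
  rcases le_total x 1 with hx1 | hx1
  · have h := abs_exp_sub_one_sub_id_le (x := -x) (by rwa [abs_neg, abs_of_nonneg hx])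
    linarith [(abs_le.1 h).2, neg_sq x]
  · nlinarith

lemma exp_neg_mul_sub_one_add_le {z y : ℝ} (hz : 0 ≤ z) (hy : 0 ≤ y) :
    exp (-(z * y)) - 1 + z * y ≤ max z (z ^ 2) * min y (y ^ 2) := by
  refine (exp_neg_sub_one_add_le_min (mul_nonneg hz hy)).trans ?_
  rcases le_total y 1 with hy1 | hy1
  · rw [min_eq_right (by nlinarith : y ^ 2 ≤ y)]
    calc min (z * y) ((z * y) ^ 2) ≤ z ^ 2 * y ^ 2 := (min_le_right _ _).trans_eq (mul_pow z y 2)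
      _ ≤ max z (z ^ 2) * y ^ 2 := by gcongr; exact le_max_right _ _
  · rw [min_eq_left (by nlinarith : y ≤ y ^ 2)]
    calc min (z * y) ((z * y) ^ 2) ≤ z * y := min_le_left _ _
      _ ≤ max z (z ^ 2) * y := by gcongr; exact le_max_left _ _

lemma convexOn_exp_neg_mul_sub_one_add (y : ℝ) :
    ConvexOn ℝ univ fun z : ℝ ↦ exp (-(z * y)) - 1 + z * y := by
  refine ⟨convex_univ, fun z _ w _ a b ha hb hab ↦ ?_⟩
  have h := convexOn_exp.2 (mem_univ (-(z * y))) (mem_univ (-(w * y))) ha hb hab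
  simp only [smul_eq_mul] at h ⊢
  have hlin : a * -(z * y) + b * -(w * y) = -((a * z + b * w) * y) := by ring
  rw [hlin] at h
  nlinarith

end ExpBounds

theorem ConvexOn.integral {X E : Type*} [MeasurableSpace X] {μ : Measure X} [AddCommGroup E]
    [Module ℝ E] {s : Set E} {f : E → X → ℝ} (hs : Convex ℝ s)
    (hf : ∀ᵐ x ∂μ, ConvexOn ℝ s (f · x)) (hint : ∀ z ∈ s, Integrable (f z) μ) :
    ConvexOn ℝ s fun z ↦ ∫ x, f z x ∂μ := by
  refine ⟨hs, fun z hz w hw a b ha hb hab ↦ ?_⟩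
  have hza := (hint z hz).const_mul a
  have hwb := (hint w hw).const_mul b
  simp only [smul_eq_mul]
  rw [← integral_const_mul, ← integral_const_mul, ← integral_add hza hwb]
  refine integral_mono_ae (hint _ (hs hz hw ha hb hab)) (hza.add hwb) ?_
  filter_upwards [hf] with x hx using hx.2 hz hw ha hb hab

section SecantBounds

variable {s : Set ℝ} {f : ℝ → ℝ} {a b r z : ℝ}

lemma ConvexOn.div_mul_sub_le_of_eq_zero (hf : ConvexOn ℝ s f) (ha : a ∈ s) (hr : r ∈ s)
    (hz : z ∈ s) (hfr : f r = 0) (har : a < r) (hrz : r < z) :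
    f a / (a - r) * (z - r) ≤ f z := by
  have h := hf.secant_mono hr ha hz har.ne hrz.ne' (har.trans hrz).le
  rw [hfr, sub_zero, sub_zero] at h
  rwa [← le_div_iff₀ (sub_pos.2 hrz)]

lemma ConvexOn.le_div_mul_sub_of_eq_zero (hf : ConvexOn ℝ s f) (hr : r ∈ s) (hb : b ∈ s)
    (hfr : f r = 0) (hrz : r < z) (hzb : z ≤ b) :
    f z ≤ f b / (b - r) * (z - r) := by
  have hz : z ∈ s := hf.1.ordConnected.out hr hb ⟨hrz.le, hzb⟩
  have h := hf.secant_mono hr hz hb hrz.ne' (hrz.trans_le hzb).ne' hzb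
  rw [hfr, sub_zero, sub_zero] at h
  rwa [div_le_iff₀ (sub_pos.2 hrz)] at h

lemma ConvexOn.exists_root_mul_sub_le (hf : ConvexOn ℝ (Ici 0) f) (hcont : ContinuousOn f (Icc a b))
    (ha : 0 ≤ a) (hab : a ≤ b) (hfa : f a < 0) (hfb : 0 < f b) :
    ∃ r m, a < r ∧ r < b ∧ f r = 0 ∧ 0 < m ∧ ∀ z, r < z → m * (z - r) ≤ f z := by
  obtain ⟨r, ⟨har, hrb⟩, hfr⟩ := intermediate_value_Icc hab hcont ⟨hfa.le, hfb.le⟩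
  replace har : a < r := har.lt_of_ne (by rintro rfl; linarith)
  replace hrb : r < b := hrb.lt_of_ne (by rintro rfl; linarith)
  refine ⟨r, f a / (a - r), har, hrb, hfr, div_pos_of_neg_of_neg hfa (sub_neg.2 har),
    fun z hz ↦ ?_⟩
  exact hf.div_mul_sub_le_of_eq_zero ha (ha.trans har.le) (ha.trans (har.trans hz).le) hfr har hz

end SecantBounds

section BranchingMechanism

variable {α ρ : ℝ} {π : Measure ℝ} {ψ : ℝ → ℝ}

lemma integrableOn_min_sq
    (hmom : ∫⁻ y in Ioi (0 : ℝ), ENNReal.ofReal (min y (y ^ 2)) ∂π < ⊤) :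
    IntegrableOn (fun y ↦ min y (y ^ 2)) (Ioi 0) π := by
  have hnn : 0 ≤ᵐ[π.restrict (Ioi 0)] fun y : ℝ ↦ min y (y ^ 2) :=
    (ae_restrict_iff' measurableSet_Ioi).2 <| ae_of_all _ fun y (hy : 0 < y) ↦
      le_min hy.le (sq_nonneg y)
  exact ⟨(continuous_id.min (continuous_pow 2)).aestronglyMeasurable,
    (hasFiniteIntegral_iff_ofReal hnn).2 hmom⟩

lemma integrableOn_exp_neg_mul_sub_one_add
    (hK : IntegrableOn (fun y ↦ min y (y ^ 2)) (Ioi 0) π) {z : ℝ} (hz : 0 ≤ z) :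
    IntegrableOn (fun y ↦ Real.exp (-(z * y)) - 1 + z * y) (Ioi 0) π := by
  refine (hK.const_mul (max z (z ^ 2))).mono' (by fun_prop) ?_
  refine (ae_restrict_iff' measurableSet_Ioi).2 <| ae_of_all _ fun y (hy : 0 < y) ↦ ?_
  rw [Real.norm_of_nonneg (exp_neg_sub_one_add_nonneg _)]
  exact exp_neg_mul_sub_one_add_le hz hy.le

lemma tendsto_integral_exp_neg_mul_sub_one_add_div
    (hK : IntegrableOn (fun y ↦ min y (y ^ 2)) (Ioi 0) π) :
    Tendsto (fun z ↦ (∫ y in Ioi (0 : ℝ), (Real.exp (-(z * y)) - 1 + z * y) ∂π) / z)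
      (𝓝[>] 0) (𝓝 0) := by
  simp_rw [← integral_div]
  have hdom : ∀ᶠ z in 𝓝[>] (0 : ℝ), ∀ᵐ y ∂π.restrict (Ioi 0),
      ‖(Real.exp (-(z * y)) - 1 + z * y) / z‖ ≤ min y (y ^ 2) := by
    filter_upwards [Ioo_mem_nhdsGT zero_lt_one] with z ⟨hz0, hz1⟩
    refine (ae_restrict_iff' measurableSet_Ioi).2 <| ae_of_all _ fun y (hy : 0 < y) ↦ ?_
    rw [Real.norm_of_nonneg (div_nonneg (exp_neg_sub_one_add_nonneg _) hz0.le),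
      div_le_iff₀ hz0, mul_comm (min _ _)]
    simpa [max_eq_left (by nlinarith : z ^ 2 ≤ z)] using
      exp_neg_mul_sub_one_add_le hz0.le hy.le
  have hlim : ∀ᵐ y ∂π.restrict (Ioi 0),
      Tendsto (fun z ↦ (Real.exp (-(z * y)) - 1 + z * y) / z) (𝓝[>] 0) (𝓝 0) := by
    refine (ae_restrict_iff' measurableSet_Ioi).2 <| ae_of_all _ fun y (hy : 0 < y) ↦
      squeeze_zero' ?_ ?_ (tendsto_nhdsWithin_of_tendsto_nhds
        ((continuous_mul_const (y ^ 2)).tendsto' 0 0 (zero_mul (y ^ 2))))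
    · filter_upwards [self_mem_nhdsWithin] with z (hz : 0 < z)
      exact div_nonneg (exp_neg_sub_one_add_nonneg _) hz.le
    · filter_upwards [self_mem_nhdsWithin] with z (hz : 0 < z)
      rw [div_le_iff₀ hz]
      nlinarith [(exp_neg_sub_one_add_le_min (mul_nonneg hz.le hy.le)).trans (min_le_right _ _)]
  simpa using tendsto_integral_filter_of_dominated_convergence _
    (Eventually.of_forall fun z ↦ by fun_prop) hdom hK hlim

lemma convexOn_of_branchingMechanism (hρ : 0 ≤ ρ)
    (hK : IntegrableOn (fun y ↦ min y (y ^ 2)) (Ioi 0) π)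
    (hψ : ∀ z : ℝ, 0 ≤ z → ψ z = -α * z + ρ * z ^ 2
        + ∫ y in Ioi (0 : ℝ), (Real.exp (-(z * y)) - 1 + z * y) ∂π) :
    ConvexOn ℝ (Ici 0) ψ := by
  have hquad : ConvexOn ℝ (Ici 0) fun z : ℝ ↦ -α * z + ρ * z ^ 2 :=
    ((LinearMap.mulLeft ℝ (-α)).convexOn (convex_Ici 0)).add ((convexOn_pow 2).smul hρ)
  have hjump : ConvexOn ℝ (Ici 0) fun z ↦
      ∫ y in Ioi (0 : ℝ), (Real.exp (-(z * y)) - 1 + z * y) ∂π :=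
    .integral (convex_Ici 0)
      (ae_of_all _ fun y ↦ (convexOn_exp_neg_mul_sub_one_add y).subset (subset_univ _)
        (convex_Ici 0))
      fun _ hz ↦ integrableOn_exp_neg_mul_sub_one_add hK hz
  exact (hquad.add hjump).congr fun z hz ↦ (hψ z hz).symm

lemma exists_pos_lt_zero_of_branchingMechanism (hα : 0 < α)
    (hK : IntegrableOn (fun y ↦ min y (y ^ 2)) (Ioi 0) π)
    (hψ : ∀ z : ℝ, 0 ≤ z → ψ z = -α * z + ρ * z ^ 2
        + ∫ y in Ioi (0 : ℝ), (Real.exp (-(z * y)) - 1 + z * y) ∂π) :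
    ∃ a, 0 < a ∧ ψ a < 0 := by
  set I := fun z ↦ ∫ y in Ioi (0 : ℝ), (Real.exp (-(z * y)) - 1 + z * y) ∂π
  have hslope : Tendsto (fun z ↦ -α + ρ * z + I z / z) (𝓝[>] 0) (𝓝 (-α)) := by
    have hlin : Tendsto (fun z ↦ -α + ρ * z) (𝓝[>] 0) (𝓝 (-α)) :=
      tendsto_nhdsWithin_of_tendsto_nhds
        (by simpa using ((continuous_const_mul ρ).tendsto 0).const_add (-α))
    simpa using hlin.add (tendsto_integral_exp_neg_mul_sub_one_add_div hK)
  obtain ⟨a, hneg, ha⟩ :=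
    ((hslope.eventually (gt_mem_nhds (neg_neg_of_pos hα))).and self_mem_nhdsWithin).exists
  refine ⟨a, ha, ?_⟩
  have ha0 : a ≠ 0 := ha.ne'
  have hψa : ψ a = a * (-α + ρ * a + I a / a) := by
    rw [hψ a (le_of_lt ha)]; field_simp; ring
  exact hψa ▸ mul_neg_of_pos_of_neg ha hneg

end BranchingMechanism

section TailIntegral

open Real

variable {g f : ℝ → ℝ} {c : ℝ}

lemma integrableOn_Ioi_of_continuousOn (hg : ContinuousOn g (Ioi c)) {b v : ℝ}
    (hb : IntegrableOn g (Ioi b)) (hv : c < v) : IntegrableOn g (Ioi v) := by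
  rw [← Ioc_union_Ioi_eq_Ioi (le_max_left v b)]
  exact ((hg.mono fun x hx ↦ hv.trans_le hx.1).integrableOn_Icc.mono_set Ioc_subset_Icc_self).union
    (hb.mono_set (Ioi_subset_Ioi (le_max_right v b)))

lemma intervalIntegrable_of_integrableOn_Ioi (hint : ∀ v, c < v → IntegrableOn g (Ioi v))
    {v w : ℝ} (hv : c < v) (hvw : v ≤ w) : IntervalIntegrable g volume v w :=
  (intervalIntegrable_iff_integrableOn_Ioc_of_le hvw).2
    ((hint v hv).mono_set Ioc_subset_Ioi_self)

lemma strictAntiOn_integral_Ioi (hpos : ∀ z, c < z → 0 < g z)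
    (hint : ∀ v, c < v → IntegrableOn g (Ioi v)) :
    StrictAntiOn (fun v ↦ ∫ z in Ioi v, g z) (Ioi c) := by
  intro v hv w hw hvw
  have hchunk : 0 < ∫ z in v..w, g z :=
    intervalIntegral.intervalIntegral_pos_of_pos_on
      (intervalIntegrable_of_integrableOn_Ioi hint hv hvw.le)
      (fun z hz ↦ hpos z (hv.trans hz.1)) hvw
  show ∫ z in Ioi w, g z < ∫ z in Ioi v, g z
  rw [← intervalIntegral.integral_interval_add_Ioi (hint v hv) (hint w hw)]
  linarith

lemma continuousOn_integral_Ioi (hg : ContinuousOn g (Ioi c))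
    (hint : ∀ v, c < v → IntegrableOn g (Ioi v)) :
    ContinuousOn (fun v ↦ ∫ z in Ioi v, g z) (Ioi c) := by
  intro v (hv : c < v)
  set u := (c + v) / 2
  have hcu : c < u := by simp only [u]; linarith
  have huv : u < v := by simp only [u]; linarith
  have hprim : ContinuousOn (fun x ↦ (∫ z in x..v + 1, g z) + ∫ z in Ioi (v + 1), g z)
      (Icc u (v + 1)) := by
    have hle : u ≤ v + 1 := by linarith
    have := intervalIntegral.continuousOn_primitive_interval_left (μ := volume) (by
      rw [uIcc_of_le hle]; exact (hg.mono fun x hx ↦ hcu.trans_le hx.1).integrableOn_Icc)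
    rw [uIcc_of_le hle] at this
    exact this.add continuousOn_const
  have hT : ContinuousOn (fun v ↦ ∫ z in Ioi v, g z) (Icc u (v + 1)) := hprim.congr fun x hx ↦
    (intervalIntegral.integral_interval_add_Ioi (hint x (hcu.trans_le hx.1))
      (hint _ (by linarith))).symm
  exact (hT.continuousAt (Icc_mem_nhds huv (by linarith))).continuousWithinAt

lemma integral_inv_const_mul_sub {K v w : ℝ} (hv : c < v) (hw : c < w) :
    ∫ z in v..w, (K * (z - c))⁻¹ = K⁻¹ * log ((w - c) / (v - c)) := by
  simp_rw [mul_inv]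
  rw [intervalIntegral.integral_const_mul, intervalIntegral.integral_comp_sub_right (·⁻¹),
    integral_inv_of_pos (sub_pos.2 hv) (sub_pos.2 hw)]

lemma intervalIntegrable_inv_const_mul_sub {K v w : ℝ} (hK : K ≠ 0) (hv : c < v)
    (hvw : v ≤ w) : IntervalIntegrable (fun z ↦ (K * (z - c))⁻¹) volume v w := by
  refine ContinuousOn.intervalIntegrable ((continuousOn_const.mul
    (continuousOn_id.sub continuousOn_const)).inv₀ fun z hz ↦ ?_)
  rw [uIcc_of_le hvw] at hz
  exact mul_ne_zero hK (sub_pos.2 (hv.trans_le hz.1)).ne'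

lemma inv_mul_log_le_integral_Ioi_inv (hpos : ∀ z, c < z → 0 < f z)
    (hint : ∀ v, c < v → IntegrableOn (fun z ↦ (f z)⁻¹) (Ioi v)) {M b v : ℝ} (hM : 0 < M)
    (hup : ∀ z, c < z → z ≤ b → f z ≤ M * (z - c)) (hv : c < v) (hvb : v ≤ b) :
    M⁻¹ * log ((b - c) / (v - c)) ≤ ∫ z in Ioi v, (f z)⁻¹ := by
  have hcb := hv.trans_le hvb
  have hcmp : ∫ z in v..b, (M * (z - c))⁻¹ ≤ ∫ z in v..b, (f z)⁻¹ := by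
    refine intervalIntegral.integral_mono_on hvb
      (intervalIntegrable_inv_const_mul_sub hM.ne' hv hvb)
      (intervalIntegrable_of_integrableOn_Ioi hint hv hvb)
      fun z hz ↦ inv_anti₀ (hpos z (hv.trans_le hz.1)) (hup z (hv.trans_le hz.1) hz.2)
  have htail : 0 ≤ ∫ z in Ioi b, (f z)⁻¹ :=
    setIntegral_nonneg measurableSet_Ioi fun z hz ↦ (inv_pos.2 (hpos z (hcb.trans hz))).le
  rw [← intervalIntegral.integral_interval_add_Ioi (hint v hv) (hint b hcb),
    ← integral_inv_const_mul_sub hv hcb]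
  linarith

lemma integral_Ioi_inv_sub_le_inv_mul_log
    (hint : ∀ v, c < v → IntegrableOn (fun z ↦ (f z)⁻¹) (Ioi v)) {m v w : ℝ} (hm : 0 < m)
    (hlow : ∀ z, c < z → m * (z - c) ≤ f z) (hv : c < v) (hvw : v ≤ w) :
    (∫ z in Ioi v, (f z)⁻¹) - ∫ z in Ioi w, (f z)⁻¹ ≤ m⁻¹ * log ((w - c) / (v - c)) := by
  rw [intervalIntegral.integral_Ioi_sub_Ioi (hint v hv) hvw,
    ← integral_inv_const_mul_sub hv (hv.trans_le hvw)]
  refine intervalIntegral.integral_mono_on hvw (intervalIntegrable_of_integrableOn_Ioi hint hv hvw)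
    (intervalIntegrable_inv_const_mul_sub hm.ne' hv hvw) fun z hz ↦ ?_
  have hcz := sub_pos.2 (hv.trans_le hz.1)
  exact inv_anti₀ (mul_pos hm hcz) (hlow z (hv.trans_le hz.1))

theorem existsUnique_integral_Ioi_inv_eq (hf : ContinuousOn f (Ioi c))
    (hpos : ∀ z, c < z → 0 < f z) (hint : ∀ v, c < v → IntegrableOn (fun z ↦ (f z)⁻¹) (Ioi v))
    {M b t : ℝ} (hM : 0 < M) (hcb : c < b) (hup : ∀ z, c < z → z ≤ b → f z ≤ M * (z - c))
    (ht : 0 < t) : ∃! v, c < v ∧ ∫ z in Ioi v, (f z)⁻¹ = t := by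
  have hinvpos : ∀ z, c < z → 0 < (f z)⁻¹ := fun z hz ↦ inv_pos.2 (hpos z hz)
  have hanti := strictAntiOn_integral_Ioi hinvpos hint
  refine existsUnique_of_exists_of_unique ?_ fun v w hv hw ↦
    hanti.injOn hv.1 hw.1 (hv.2.trans hw.2.symm)
  obtain ⟨v₁, hcv₁, hv₁⟩ : ∃ v₁, c < v₁ ∧ t ≤ ∫ z in Ioi v₁, (f z)⁻¹ := by
    set v₁ := c + (b - c) * exp (-(M * t))
    have hexp : exp (-(M * t)) < 1 := exp_lt_one_iff.2 (by nlinarith)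
    have hcv₁ : c < v₁ := by have := exp_pos (-(M * t)); simp only [v₁]; nlinarith
    have hv₁b : v₁ ≤ b := by simp only [v₁]; nlinarith
    refine ⟨v₁, hcv₁, le_of_eq_of_le ?_
      (inv_mul_log_le_integral_Ioi_inv hpos hint hM hup hcv₁ hv₁b)⟩
    rw [add_sub_cancel_left, div_mul_cancel_left₀ (sub_pos.2 hcb).ne', log_inv, log_exp]
    field_simp
  obtain ⟨v₂, hv₂, hv₁₂⟩ := (((tendsto_integral_Ioi_zero tendsto_id).eventually
    (gt_mem_nhds ht)).and (eventually_ge_atTop v₁)).exists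
  obtain ⟨v, hv, hTv⟩ := intermediate_value_Icc' hv₁₂
    ((continuousOn_integral_Ioi (hf.inv₀ fun z hz ↦ (hpos z hz).ne') hint).mono
      fun x hx ↦ hcv₁.trans_le hx.1) ⟨hv₂.le, hv₁⟩
  exact ⟨v, hcv₁.trans_le hv.1, hTv⟩

theorem exists_sub_le_exp_of_integral_Ioi_inv_eq
    (hint : ∀ v, c < v → IntegrableOn (fun z ↦ (f z)⁻¹) (Ioi v)) {m : ℝ} (hm : 0 < m)
    (hlow : ∀ z, c < z → m * (z - c) ≤ f z) :
    ∃ C t₀ : ℝ, 0 < C ∧ 0 < t₀ ∧ ∀ t, t₀ ≤ t → ∀ v, c < v →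
      ∫ z in Ioi v, (f z)⁻¹ = t → v - c ≤ C * exp (-m * t) := by
  set T := fun v ↦ ∫ z in Ioi v, (f z)⁻¹
  have hinvpos : ∀ z, c < z → 0 < (f z)⁻¹ := fun z hz ↦
    inv_pos.2 ((mul_pos hm (sub_pos.2 hz)).trans_le (hlow z hz))
  have hanti := strictAntiOn_integral_Ioi hinvpos hint
  have hc₁ : c + 1 ∈ Ioi c := by simp
  have hc₂ : c + 2 ∈ Ioi c := by simp
  have hT₁ : 0 < T (c + 1) :=
    (setIntegral_nonneg measurableSet_Ioi fun z hz ↦ (hinvpos z (hc₂.trans hz)).le).trans_lt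
      (hanti hc₁ hc₂ (by linarith))
  refine ⟨exp (m * T (c + 1)), T (c + 1), exp_pos _, hT₁, fun t ht v hv hTv ↦ ?_⟩
  have hv₁ : v ≤ c + 1 := (hanti.le_iff_ge hc₁ hv).1 (hTv ▸ ht)
  have hlog := integral_Ioi_inv_sub_le_inv_mul_log hint hm hlow hv hv₁
  rw [add_sub_cancel_left, one_div, log_inv, hTv] at hlog
  have hlog' : log (v - c) ≤ m * T (c + 1) + -m * t := by
    have := mul_le_mul_of_nonneg_left hlog hm.le
    rw [← neg_mul_eq_mul_neg, mul_neg, mul_inv_cancel_left₀ hm.ne'] at this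
    linarith
  calc v - c = exp (log (v - c)) := (exp_log (sub_pos.2 hv)).symm
    _ ≤ exp (m * T (c + 1) + -m * t) := exp_le_exp.2 hlog'
    _ = exp (m * T (c + 1)) * exp (-m * t) := exp_add _ _

end TailIntegral

theorem stmt16_general (α ρ : ℝ) (π : Measure ℝ)
    (hα : 0 < α) (hρ : 0 ≤ ρ)
    (hmom : ∫⁻ y in Set.Ioi (0 : ℝ), ENNReal.ofReal (min y (y ^ 2)) ∂π < ⊤)
    (ψ : ℝ → ℝ)
    (hψ : ∀ z : ℝ, 0 ≤ z → ψ z = -α * z + ρ * z ^ 2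
        + ∫ y in Set.Ioi (0 : ℝ), (Real.exp (-(z * y)) - 1 + z * y) ∂π)
    (hGrey : ∃ z' : ℝ, 0 < z' ∧ (∀ z : ℝ, z' < z → 0 < ψ z) ∧
        IntegrableOn (fun z : ℝ => (ψ z)⁻¹) (Set.Ioi z') volume)
    (vbar : ℝ) (hvbar : vbar = sSup {l : ℝ | 0 ≤ l ∧ ψ l = 0}) :
    (∀ t : ℝ, 0 < t →
        ∃! v : ℝ, vbar < v ∧ ∫ z in Set.Ioi v, (ψ z)⁻¹ = t)
    ∧ ∃ C δ t₀ : ℝ, 0 < C ∧ 0 < δ ∧ 0 < t₀ ∧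
        ∀ t : ℝ, t₀ ≤ t → ∀ v : ℝ,
          vbar < v → (∫ z in Set.Ioi v, (ψ z)⁻¹) = t →
            0 < v - vbar ∧ v - vbar ≤ C * Real.exp (-δ * t) := by
  obtain ⟨z', -, hψz', hGrey⟩ := hGrey
  have hK := integrableOn_min_sq hmom
  have hconv := convexOn_of_branchingMechanism hρ hK hψ
  have hcont : ContinuousOn ψ (Ioi 0) := by simpa using hconv.continuousOn_interior
  obtain ⟨a, ha, hψa⟩ := exists_pos_lt_zero_of_branchingMechanism hα hK hψ
  set b := max a z' + 1
  have hψb : 0 < ψ b := hψz' b (by simp only [b]; linarith [le_max_right a z'])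
  have hab : a < b := by simp only [b]; linarith [le_max_left a z']
  obtain ⟨r, m, har, hrb, hψr, hm, hlow⟩ := hconv.exists_root_mul_sub_le
    (hcont.mono fun x hx ↦ ha.trans_le hx.1) ha.le hab.le hψa hψb
  have hr : 0 ≤ r := ha.le.trans har.le
  have hpos : ∀ z, r < z → 0 < ψ z := fun z hz ↦
    (mul_pos hm (sub_pos.2 hz)).trans_le (hlow z hz)
  have hint : ∀ v, r < v → IntegrableOn (fun z ↦ (ψ z)⁻¹) (Ioi v) := fun v hv ↦
    integrableOn_Ioi_of_continuousOn
      ((hcont.mono (Ioi_subset_Ioi hr)).inv₀ fun z hz ↦ (hpos z hz).ne') hGrey hv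
  obtain rfl : vbar = r := hvbar ▸ IsGreatest.csSup_eq
    ⟨⟨hr, hψr⟩, fun l hl ↦ not_lt.1 fun hrl ↦ (hpos l hrl).ne' hl.2⟩
  obtain ⟨C, t₀, hC, ht₀, hdecay⟩ := exists_sub_le_exp_of_integral_Ioi_inv_eq hint hm hlow
  refine ⟨fun t ht ↦ existsUnique_integral_Ioi_inv_eq (hcont.mono (Ioi_subset_Ioi hr)) hpos hint
    (div_pos hψb (sub_pos.2 hrb)) hrb (fun z hz hzb ↦
      hconv.le_div_mul_sub_of_eq_zero hr (ha.le.trans hab.le) hψr hz hzb) ht,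
    C, m, t₀, hC, hm, ht₀, fun t ht v hv hTv ↦ ⟨sub_pos.2 hv, hdecay t ht v hv hTv⟩⟩

/-- Let `ψ` be a branching mechanism with `ψ(z) > 0` for some `z > 0`,
satisfying Grey's condition, and let `v̄ = sup{λ ≥ 0 : ψ(λ) = 0} ∈ (0,∞)`.
Then: (i) for every `t > 0` there is a unique `v̄_t ∈ (v̄,∞)` with
`∫_{v̄_t}^∞ ψ(z)⁻¹ dz = t`; (ii) there are `C, δ, t₀ > 0` such that
`0 < v̄_t − v̄ ≤ C e^{−δt}` for all `t ≥ t₀`. -/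
theorem stmt16 (α ρ : ℝ) (π : Measure ℝ)
    (hα : 0 < α) (hρ : 0 ≤ ρ)
    (hmom : ∫⁻ y in Set.Ioi (0 : ℝ), ENNReal.ofReal (min y (y ^ 2)) ∂π < ⊤)
    (ψ : ℝ → ℝ)
    (hψ : ∀ z : ℝ, 0 ≤ z → ψ z = -α * z + ρ * z ^ 2
        + ∫ y in Set.Ioi (0 : ℝ), (Real.exp (-(z * y)) - 1 + z * y) ∂π)
    (hpos : ∃ z : ℝ, 0 < z ∧ 0 < ψ z)
    (hGrey : ∃ z' : ℝ, 0 < z' ∧ (∀ z : ℝ, z' < z → 0 < ψ z) ∧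
        IntegrableOn (fun z : ℝ => (ψ z)⁻¹) (Set.Ioi z') volume)
    (vbar : ℝ) (hvbar : vbar = sSup {l : ℝ | 0 ≤ l ∧ ψ l = 0}) :
    (∀ t : ℝ, 0 < t →
        ∃! v : ℝ, vbar < v ∧ ∫ z in Set.Ioi v, (ψ z)⁻¹ = t)
    ∧ ∃ C δ t₀ : ℝ, 0 < C ∧ 0 < δ ∧ 0 < t₀ ∧
        ∀ t : ℝ, t₀ ≤ t → ∀ v : ℝ,
          vbar < v → (∫ z in Set.Ioi v, (ψ z)⁻¹) = t →
            0 < v - vbar ∧ v - vbar ≤ C * Real.exp (-δ * t) :=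
  stmt16_general α ρ π hα hρ hmom ψ hψ hGrey vbar hvbar
end
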